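/- arXiv:math/0111279 — 14 statements merged into one kernel-verified Lean document; each statement's English description precedes it below -/
import Mathlib

section
/- If M is a left cancellative monoid and S is a subset of M containing 1 that is closed under right multiplication by units, then S satisfies the spanning condition (2.1) if and only if it satisfies condition (2.2): if xy'' = yx'' with x, y in S, then there exist x', y' in S and z in M satisfying xy' = yx', x'' = x'z, and y'' = y'z. -/
open scoped Pointwise

variable {M : Type*} [Monoid M]

/-- `x` is a left divisor of `y`. -/
def LDvd (x y : M) : Prop := ∃ c, y = x * c

/-- `x` is a proper left divisor of `y`. -/
def PDvd (x y : M) : Prop := ∃ c, ¬ IsUnit c ∧ y = x * c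

/-- `x ≃ y`: `y = x * u` for some unit `u`. -/
def AssocU (x y : M) : Prop := ∃ u : M, IsUnit u ∧ y = x * u

/-- The set of units of a monoid. -/
def UnitsSet (N : Type*) [Monoid N] : Set N := {u : N | IsUnit u}

/-- `S` spans `M` (Definition 2.2). -/
def Spans (S : Set M) : Prop :=
  Submonoid.closure S = ⊤ ∧ (1 : M) ∈ S ∧
  (∀ x ∈ S, ∀ u : M, IsUnit u → x * u ∈ S) ∧
  ∀ x ∈ S, ∀ y ∈ S, ∀ z : M, LDvd x z → LDvd y z →
    ∃ x' ∈ S, ∃ y' ∈ S, x * y' = y * x' ∧ LDvd (x * y') z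

/-- `S` quasi-spans `M`: `S M^*` spans `M`. -/
def QuasiSpans (S : Set M) : Prop := Spans (S * UnitsSet M)

/-- Condition (2.2). -/
def Cond22 (S : Set M) : Prop :=
  ∀ x ∈ S, ∀ y ∈ S, ∀ x'' y'' : M, x * y'' = y * x'' →
    ∃ x' ∈ S, ∃ y' ∈ S, ∃ z : M, x * y' = y * x' ∧ x'' = x' * z ∧ y'' = y' * z

/-- `x` is an atom: not a unit, and in any factorization one factor is a unit. -/
def IsAtomM (x : M) : Prop := ¬ IsUnit x ∧ ∀ y z : M, x = y * z → IsUnit y ∨ IsUnit z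

/-- `z` is a minimal common right multiple (mcm) of `x` and `y`. -/
def Mcm (x y z : M) : Prop :=
  LDvd x z ∧ LDvd y z ∧ ∀ z', PDvd z' z → ¬ (LDvd x z' ∧ LDvd y z')

/-- `x` is `S`-simple. -/
def SSimple (S : Set M) (x : M) : Prop :=
  ∀ y, PDvd y x → {d : M | LDvd d y} ∩ S ≠ {d : M | LDvd d x} ∩ S

theorem stmt1
    (hl : ∀ a b c : M, a * b = a * c → b = c)
    (S : Set M) (h1 : (1 : M) ∈ S)
    (hu : ∀ x ∈ S, ∀ u : M, IsUnit u → x * u ∈ S) :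
    (∀ x ∈ S, ∀ y ∈ S, ∀ z : M, LDvd x z → LDvd y z →
        ∃ x' ∈ S, ∃ y' ∈ S, x * y' = y * x' ∧ LDvd (x * y') z) ↔
      Cond22 S := by
  constructor
  · intro h x hx y hy x'' y'' heq
    obtain ⟨x', hx', y', hy', hcomm, t, hz⟩ :=
      h x hx y hy (x * y'') ⟨y'', rfl⟩ ⟨x'', heq⟩
    refine ⟨x', hx', y', hy', t, hcomm, ?_, ?_⟩
    · apply hl y
      rw [← heq, hz, ← mul_assoc, ← hcomm, mul_assoc]
    · exact hl x _ _ (by rw [hz, mul_assoc])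
  · intro h x hx y hy z ⟨c, hc⟩ ⟨d, hd⟩
    obtain ⟨x', hx', y', hy', w, hcomm, _, hcw⟩ :=
      h x hx y hy d c (by rw [← hc, ← hd])
    exact ⟨x', hx', y', hy', hcomm, w, by rw [hc, hcw, mul_assoc]⟩
end

section
/- Assume M is a left cancellative monoid and S is a subset satisfying condition (2.2). If xy'' = yx'' with x in S^p and y in S^q, then there exist x' in S^p, y' in S^q, and z in M satisfying xy' = yx', x'' = x'z, and y'' = y'z. -/
open scoped Pointwise

variable {M : Type*} [Monoid M]

theorem auxA
    (S : Set M) (h22 : Cond22 S) (q : ℕ) (x y x'' y'' : M)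
    (hx : x ∈ S) (hy : y ∈ S ^ q) (h : x * y'' = y * x'') :
    ∃ x' ∈ S, ∃ y' ∈ S ^ q, ∃ z : M,
      x * y' = y * x' ∧ x'' = x' * z ∧ y'' = y' * z := by
  induction q generalizing x y x'' y'' with
  | zero =>
    rw [pow_zero, Set.mem_one] at hy
    subst hy
    refine ⟨x, hx, 1, by simp [Set.mem_one], y'', by simp, ?_, by simp⟩
    rw [h]; simp
  | succ n ih =>
    rw [pow_succ', Set.mem_mul] at hy
    obtain ⟨y1, hy1, y2, hy2, rfl⟩ := hy
    rw [mul_assoc] at h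
    obtain ⟨x1', hx1', y1', hy1', z1, e1, e2, e3⟩ :=
      h22 x hx y1 hy1 (y2 * x'') y'' h
    obtain ⟨x2', hx2', y2', hy2', z, f1, f2, f3⟩ :=
      ih x1' y2 x'' z1 hx1' hy2 e2.symm
    refine ⟨x2', hx2', y1' * y2', ?_, z, ?_, f2, ?_⟩
    · rw [pow_succ']; exact Set.mul_mem_mul hy1' hy2'
    · rw [← mul_assoc, e1, mul_assoc, f1, mul_assoc]
    · rw [e3, f3, mul_assoc]

theorem stmt2
    (hl : ∀ a b c : M, a * b = a * c → b = c)
    (S : Set M) (h22 : Cond22 S) (p q : ℕ) (x y x'' y'' : M)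
    (hx : x ∈ S ^ p) (hy : y ∈ S ^ q) (h : x * y'' = y * x'') :
    ∃ x' ∈ S ^ p, ∃ y' ∈ S ^ q, ∃ z : M,
      x * y' = y * x' ∧ x'' = x' * z ∧ y'' = y' * z := by
  induction p generalizing x x'' y'' with
  | zero =>
    rw [pow_zero, Set.mem_one] at hx
    subst hx
    refine ⟨1, by simp [Set.mem_one], y, hy, x'', by simp, by simp, ?_⟩
    rw [← h]; simp
  | succ n ih =>
    rw [pow_succ, Set.mem_mul] at hx
    obtain ⟨x1, hx1, x2, hx2, rfl⟩ := hx
    rw [mul_assoc] at h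
    obtain ⟨x1', hx1', y1', hy1', z1, e1, e2, e3⟩ :=
      ih x1 x'' (x2 * y'') hx1 h
    obtain ⟨x2', hx2', y2', hy2', z, f1, f2, f3⟩ :=
      auxA S h22 q x2 y1' z1 y'' hx2 hy1' e3
    refine ⟨x1' * x2', ?_, y2', hy2', z, ?_, ?_, f3⟩
    · rw [pow_succ]; exact Set.mul_mem_mul hx1' hx2'
    · rw [mul_assoc, f1, ← mul_assoc, e1, mul_assoc]
    · rw [e2, f2, mul_assoc]
end

section
/- If M is a left cancellative monoid and S spans M, then S^p spans M for every positive integer p. -/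
open scoped Pointwise

variable {M : Type*} [Monoid M]

lemma one_mem_pow' {S : Set M} (h1 : (1:M) ∈ S) (p : ℕ) : (1:M) ∈ S ^ p := by
  induction p with
  | zero => simp
  | succ n ih =>
    rw [pow_succ]
    exact ⟨1, ih, 1, h1, mul_one 1⟩

lemma subset_pow {S : Set M} (h1 : (1:M) ∈ S) {p : ℕ} (hp : 0 < p) : S ⊆ S ^ p := by
  intro x hx
  obtain ⟨n, rfl⟩ := Nat.exists_eq_add_of_lt hp
  rw [zero_add, pow_succ]
  exact ⟨1, one_mem_pow' h1 _, x, hx, one_mul x⟩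

lemma span_step
    (hl : ∀ a b c : M, a * b = a * c → b = c)
    {S : Set M} (hS : Spans S) :
    ∀ q : ℕ, ∀ x ∈ S, ∀ y ∈ S ^ q, ∀ z : M, LDvd x z → LDvd y z →
      ∃ x' ∈ S, ∃ y' ∈ S ^ q, x * y' = y * x' ∧ LDvd (x * y') z := by
  intro q
  induction q with
  | zero =>
    intro x hx y hy z hxz _
    rw [pow_zero] at hy
    rcases hy with rfl
    exact ⟨x, hx, 1, by simp, by simp, by simpa using hxz⟩
  | succ n ih =>
    intro x hx y hy z hxz hyz
    rw [pow_succ'] at hy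
    obtain ⟨y1, hy1, y2, hy2, rfl⟩ := hy
    obtain ⟨c, hc⟩ := hyz
    have hy1z : LDvd y1 z := ⟨y2 * c, by rw [hc, mul_assoc]⟩
    obtain ⟨xA, hxA, yA, hyA, heq1, hd1⟩ := hS.2.2.2 x hx y1 hy1 z hxz hy1z
    obtain ⟨w, hw⟩ := hy1z
    obtain ⟨d, hd⟩ := hd1
    have hxAw : LDvd xA w := by
      refine ⟨d, hl y1 _ _ ?_⟩
      rw [← hw, hd, heq1, mul_assoc]
    have hy2w : LDvd y2 w := by
      refine ⟨c, hl y1 _ _ ?_⟩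
      rw [← hw, hc, mul_assoc]
    obtain ⟨x'', hx'', yB, hyB, heq2, hd2⟩ := ih xA hxA y2 hy2 w hxAw hy2w
    refine ⟨x'', hx'', yA * yB, ?_, ?_, ?_⟩
    · rw [pow_succ']
      exact ⟨yA, hyA, yB, hyB, rfl⟩
    · calc x * (yA * yB) = (x * yA) * yB := by rw [mul_assoc]
        _ = y1 * (xA * yB) := by rw [heq1, mul_assoc]
        _ = y1 * (y2 * x'') := by rw [heq2]
        _ = y1 * y2 * x'' := by rw [mul_assoc]
    · obtain ⟨e, he⟩ := hd2
      exact ⟨e, by rw [hw, he]; simp only [← mul_assoc]; rw [heq1]⟩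

lemma span_pow_pow
    (hl : ∀ a b c : M, a * b = a * c → b = c)
    {S : Set M} (hS : Spans S) :
    ∀ p q : ℕ, ∀ x ∈ S ^ p, ∀ y ∈ S ^ q, ∀ z : M, LDvd x z → LDvd y z →
      ∃ x' ∈ S ^ p, ∃ y' ∈ S ^ q, x * y' = y * x' ∧ LDvd (x * y') z := by
  intro p
  induction p with
  | zero =>
    intro q x hx y hy z _ hyz
    rw [pow_zero] at hx
    rcases hx with rfl
    exact ⟨1, by simp [pow_zero], y, hy, by simp, by simpa using hyz⟩
  | succ n ih =>
    intro q x hx y hy z hxz hyz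
    rw [pow_succ'] at hx
    obtain ⟨x1, hx1, x2, hx2, rfl⟩ := hx
    obtain ⟨c, hc⟩ := hxz
    have hx1z : LDvd x1 z := ⟨x2 * c, by rw [hc, mul_assoc]⟩
    obtain ⟨xA, hxA, yA, hyA, heq1, hd1⟩ := span_step hl hS q x1 hx1 y hy z hx1z hyz
    obtain ⟨w, hw⟩ := hx1z
    obtain ⟨d, hd⟩ := hd1
    have hx2w : LDvd x2 w := by
      refine ⟨c, hl x1 _ _ ?_⟩
      rw [← hw, hc, mul_assoc]
    have hyAw : LDvd yA w := by
      refine ⟨d, hl x1 _ _ ?_⟩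
      rw [← hw, hd, mul_assoc]
    obtain ⟨x2', hx2', yB, hyB, heq2, hd2⟩ := ih q x2 hx2 yA hyA w hx2w hyAw
    refine ⟨xA * x2', ?_, yB, hyB, ?_, ?_⟩
    · rw [pow_succ']
      exact ⟨xA, hxA, x2', hx2', rfl⟩
    · calc x1 * x2 * (yB) = x1 * (x2 * yB) := by rw [mul_assoc]
        _ = x1 * (yA * x2') := by rw [heq2]
        _ = (x1 * yA) * x2' := by rw [mul_assoc]
        _ = y * (xA * x2') := by rw [heq1, mul_assoc]
    · obtain ⟨e, he⟩ := hd2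
      exact ⟨e, by rw [hw, he]; simp only [← mul_assoc]⟩

theorem stmt3
    (hl : ∀ a b c : M, a * b = a * c → b = c)
    (S : Set M) (hS : Spans S) :
    ∀ p : ℕ, 0 < p → Spans (S ^ p) := by
  intro p hp
  refine ⟨?_, one_mem_pow' hS.2.1 p, ?_, ?_⟩
  · rw [eq_top_iff, ← hS.1]
    exact Submonoid.closure_mono (subset_pow hS.2.1 hp)
  · obtain ⟨n, rfl⟩ := Nat.exists_eq_add_of_lt hp
    intro x hx u hu
    rw [zero_add, pow_succ] at hx ⊢
    obtain ⟨a, ha, b, hb, rfl⟩ := hx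
    exact ⟨a, ha, b * u, hS.2.2.1 b hb u hu, by rw [mul_assoc]⟩
  · intro x hx y hy z hxz hyz
    exact span_pow_pow hl hS p p x hx y hy z hxz hyz
end

section
/- If M is a left cancellative monoid and S spans M, then every right divisor of an element of S lies in S, and M^* S \subseteq S holds. -/
open scoped Pointwise

variable {M : Type*} [Monoid M]

theorem stmt4
    (hl : ∀ a b c : M, a * b = a * c → b = c)
    (S : Set M) (hS : Spans S) :
    (∀ x z : M, ∀ y ∈ S, y = x * z → z ∈ S) ∧
    (∀ u x : M, IsUnit u → x ∈ S → u * x ∈ S) := by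
  obtain ⟨hgen, h1, hunit, hcomm⟩ := hS
  -- Key step: if `s ∈ S`, `y ∈ S` and `y = s * w`, then `w ∈ S`.
  have key : ∀ s ∈ S, ∀ w y, y ∈ S → y = s * w → w ∈ S := by
    intro s hs w y hy hyw
    obtain ⟨x', hx', y', hy', heq, c, hc⟩ :=
      hcomm s hs y hy y ⟨w, hyw⟩ ⟨1, (mul_one y).symm⟩
    -- y = s * y' * c  and  y = s * w, so w = y' * c
    have hw : w = y' * c := hl s _ _ (by rw [← hyw, hc, mul_assoc])
    -- s * y' = y * x' = s * (y' * c) * x'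
    have h2 : y' = y' * (c * x') := by
      apply hl s
      rw [heq, hc]; simp [mul_assoc]
    have hcx : c * x' = 1 := (hl y' 1 (c * x') (by rw [mul_one, ← h2])).symm
    have hxc : x' * c = 1 := by
      apply hl (x' * c) _ 1
      rw [mul_one]
      calc x' * c * (x' * c) = x' * (c * x') * c := by simp [mul_assoc]
        _ = x' * c := by rw [hcx, mul_one]
    have hcunit : IsUnit c := ⟨⟨c, x', hcx, hxc⟩, rfl⟩
    rw [hw]
    exact hunit y' hy' c hcunit
  have part1 : ∀ x z : M, ∀ y ∈ S, y = x * z → z ∈ S := by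
    intro x z y hy hyxz
    have hx : x ∈ Submonoid.closure S := by rw [hgen]; trivial
    induction hx using Submonoid.closure_induction generalizing z y with
    | mem s hs => exact key s hs z y hy hyxz
    | one => rw [hyxz, one_mul] at hy; exact hy
    | mul a b _ _ iha ihb =>
      have hbz : b * z ∈ S := iha (b * z) y hy (by rw [hyxz, mul_assoc])
      exact ihb z (b * z) hbz rfl
  refine ⟨part1, fun u x hu hx => ?_⟩
  obtain ⟨v, hv⟩ := hu
  exact part1 (↑v⁻¹) (u * x) x hx (by rw [← mul_assoc, ← hv, v.inv_mul, one_mul])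
end

section
/- If M is a left cancellative monoid and S quasi-spans M, then (SM^*)^n = S^n M^* holds for every positive integer n. -/
open scoped Pointwise

variable {M : Type*} [Monoid M]

theorem stmt7
    (hl : ∀ a b c : M, a * b = a * c → b = c)
    (S : Set M) (hS : QuasiSpans S) :
    ∀ n : ℕ, 0 < n → (S * UnitsSet M) ^ n = S ^ n * UnitsSet M := by
  obtain ⟨hclos, hone, hrightu, hmcm⟩ := hS
  set U : Set M := UnitsSet M with hU
  -- right invertible implies unit
  have hunit_of : ∀ x c : M, x * c = 1 → IsUnit x := by
    intro x c hxc
    have h1 : c * x = 1 := by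
      have : x * (c * x) = x * 1 := by
        rw [mul_one, ← mul_assoc, hxc, one_mul]
      exact hl x (c * x) 1 this
    exact ⟨⟨x, c, hxc, h1⟩, rfl⟩
  -- all units are in S * U
  have hUsub : U ⊆ S * U := by
    obtain ⟨s₀, hs₀, u₀, hu₀, h10⟩ := hone
    have hs₀u : IsUnit s₀ := by
      obtain ⟨w, hw⟩ := hu₀
      exact hunit_of s₀ u₀ h10
    intro v hv
    obtain ⟨w, hw⟩ := hs₀u
    refine ⟨s₀, hs₀, (w⁻¹ : Mˣ) * v, ?_, ?_⟩
    · exact (Units.isUnit (w⁻¹)).mul hv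
    · show s₀ * (↑w⁻¹ * v) = v
      rw [← hw, ← mul_assoc, Units.mul_inv, one_mul]
  -- key lemma : unit * (element of S*U) ∈ S*U
  have hleft : ∀ v : M, IsUnit v → ∀ w ∈ S * U, v * w ∈ S * U := by
    intro v hv w hw
    obtain ⟨vu, hvu⟩ := hv
    have hvinv : (↑vu⁻¹ : M) ∈ S * U := hUsub (Units.isUnit vu⁻¹)
    -- apply the mcm condition with x = v⁻¹, y = w, z = w
    obtain ⟨x', hx', y', hy', hxy, c, hc⟩ :=
      hmcm (↑vu⁻¹ : M) hvinv w hw w ⟨v * w, by rw [← mul_assoc, ← hvu, Units.inv_mul, one_mul]⟩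
        ⟨1, (mul_one w).symm⟩
    -- (v⁻¹ * y') = w * x' and (v⁻¹ * y') * c = w, so x' * c = 1
    have hx'c : x' * c = 1 := by
      have : w * (x' * c) = w * 1 := by
        rw [mul_one, ← mul_assoc, ← hxy, ← hc]
      exact hl w (x' * c) 1 this
    have hx'unit : IsUnit x' := hunit_of x' c hx'c
    obtain ⟨xu, hxu⟩ := hx'unit
    -- v * w = y' * x'⁻¹
    have hvw : v * w = y' * ↑xu⁻¹ := by
      have h1 : y' = v * w * x' := by
        have : v * (↑vu⁻¹ * y') = v * (w * x') := by rw [hxy]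
        calc y' = v * ↑vu⁻¹ * y' := by rw [← hvu, Units.mul_inv, one_mul]
          _ = v * (w * x') := by rw [mul_assoc]; exact this
          _ = v * w * x' := by rw [mul_assoc]
      rw [h1, ← hxu, mul_assoc, Units.mul_inv, mul_one]
    rw [hvw]
    exact hrightu y' hy' _ (Units.isUnit xu⁻¹)
  -- main induction: prove for n+1
  have main : ∀ m : ℕ, (S * U) ^ (m + 1) = S ^ (m + 1) * U := by
    intro m
    induction m with
    | zero => simp [pow_one]
    | succ m ih =>
      rw [pow_succ (S * U) (m + 1), pow_succ S (m + 1), ih]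
      apply Set.Subset.antisymm
      · rintro _ ⟨a, ⟨p, hp, u, hu, rfl⟩, b, hb, rfl⟩
        obtain ⟨s, hs, u', hu', hsu⟩ := hleft u hu b hb
        refine ⟨p * s, ⟨p, hp, s, hs, rfl⟩, u', hu', ?_⟩
        show p * s * u' = p * u * b
        rw [mul_assoc, show s * u' = u * b from hsu, ← mul_assoc]
      · rintro _ ⟨_, ⟨p, hp, s, hs, rfl⟩, u, hu, rfl⟩
        refine ⟨p, ⟨p, hp, 1, isUnit_one, mul_one p⟩, s * u, ⟨s, hs, u, hu, rfl⟩, ?_⟩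
        exact (mul_assoc p s u).symm
  intro n hn
  obtain ⟨m, rfl⟩ := Nat.exists_eq_add_of_lt hn
  rw [zero_add]
  exact main m
end

section
/- Assume M is a left cancellative monoid and S quasi-spans M. If x_i \preceq z with x_i in S for 1 \leq i \leq n, then there exists x in S^n satisfying x_i \preceq x \preceq z for all 1 \leq i \leq n. -/
open scoped Pointwise

variable {M : Type*} [Monoid M]

lemma key_stmt8
    (hl : ∀ a b c : M, a * b = a * c → b = c)
    (S : Set M) (hS : QuasiSpans S) :
    ∀ n (z : M) (x : Fin n → M), (∀ i, x i ∈ S * UnitsSet M) → (∀ i, LDvd (x i) z) →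
      ∃ p ∈ S ^ n, ∃ u : M, IsUnit u ∧ (∀ i, LDvd (x i) (p * u)) ∧ LDvd (p * u) z := by
  intro n
  induction n with
  | zero =>
    intro z x _ _
    exact ⟨1, by simp [pow_zero], 1, isUnit_one, fun i => i.elim0,
      ⟨z, by simp⟩⟩
  | succ n ih =>
    intro z x hx hd
    obtain ⟨s0, hs0, u0, hu0, he0'⟩ := hx 0
    have he0 : s0 * u0 = x 0 := he0'
    have hs0' : s0 ∈ S * UnitsSet M := ⟨s0, hs0, 1, isUnit_one, mul_one s0⟩
    obtain ⟨c0, hc0⟩ := hd 0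
    set c := u0 * c0 with hc
    have hzc : z = s0 * c := by rw [hc, ← mul_assoc, he0, hc0]
    -- combine s0 with each tail element
    have H : ∀ i : Fin n, ∃ y' ∈ S * UnitsSet M,
        (∃ x', x i.succ * x' = s0 * y') ∧ LDvd y' c := by
      intro i
      obtain ⟨x', _, y', hy', heq, hdz⟩ :=
        hS.2.2.2 s0 hs0' (x i.succ) (hx i.succ) z ⟨c, hzc⟩ (hd i.succ)
      obtain ⟨d, hdd⟩ := hdz
      refine ⟨y', hy', ⟨x', heq.symm⟩, ⟨d, ?_⟩⟩
      apply hl s0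
      rw [← hzc, hdd, mul_assoc]
    choose y hy hyx hyc using H
    obtain ⟨p, hp, u, hu, hpd, hpc⟩ := ih c y hy hyc
    obtain ⟨U0, hU0⟩ := hu0
    refine ⟨s0 * p, ?_, u, hu, ?_, ?_⟩
    · rw [pow_succ']
      exact Set.mul_mem_mul hs0 hp
    · intro i
      refine Fin.cases ?_ ?_ i
      · refine ⟨(↑U0⁻¹ : M) * (p * u), ?_⟩
        rw [← he0, ← hU0, mul_assoc, mul_assoc, ← mul_assoc (U0 : M),
          Units.mul_inv, one_mul]
      · intro j
        obtain ⟨x', hx'⟩ := hyx j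
        obtain ⟨e, he⟩ := hpd j
        exact ⟨x' * e, by rw [mul_assoc, he, ← mul_assoc, ← hx', mul_assoc]⟩
    · obtain ⟨f, hf⟩ := hpc
      exact ⟨f, by rw [hzc, hf, ← mul_assoc, ← mul_assoc]⟩

theorem stmt8
    (hl : ∀ a b c : M, a * b = a * c → b = c)
    (S : Set M) (hS : QuasiSpans S)
    (n : ℕ) (z : M) (x : Fin n → M)
    (hx : ∀ i, x i ∈ S) (hdvd : ∀ i, LDvd (x i) z) :
    ∃ w ∈ S ^ n, (∀ i, LDvd (x i) w) ∧ LDvd w z := by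
  obtain ⟨p, hp, u, hu, hpd, hpz⟩ := key_stmt8 hl S hS n z x
    (fun i => ⟨x i, hx i, 1, isUnit_one, mul_one _⟩) hdvd
  obtain ⟨U, hU⟩ := hu
  refine ⟨p, hp, fun i => ?_, ?_⟩
  · obtain ⟨cc, hcc⟩ := hpd i
    refine ⟨cc * (↑U⁻¹ : M), ?_⟩
    have : p * u * (↑U⁻¹ : M) = x i * (cc * (↑U⁻¹ : M)) := by
      rw [hcc, mul_assoc]
    rwa [← hU, mul_assoc, Units.mul_inv, mul_one] at this
  · obtain ⟨d, hd⟩ := hpz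
    exact ⟨u * d, by rw [hd, mul_assoc]⟩
end

section
/- Assume M is a left cancellative monoid and S is a minimal quasi-spanning subset of M. Then for every pair (x, u) in S \times M^*, there exists a unique pair (x', u') in S \times M^* satisfying ux = x'u', and the mapping sending x to x' defines a group action of M^* on S. -/
open scoped Pointwise

variable {M : Type*} [Monoid M]

theorem stmt9
    (hl : ∀ a b c : M, a * b = a * c → b = c)
    (S : Set M) (hS : QuasiSpans S)
    (hmin : ∀ T : Set M, T ⊆ S → QuasiSpans T → T = S) :
    (∀ x ∈ S, ∀ u : M, IsUnit u →
      ∃! p : M × M, p.1 ∈ S ∧ IsUnit p.2 ∧ u * x = p.1 * p.2) ∧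
    ∃ a : Mˣ → S → S,
      (∀ (u : Mˣ) (x : S), ∃ u' : Mˣ, (u : M) * (x : M) = (a u x : M) * (u' : M)) ∧
      (∀ x : S, a 1 x = x) ∧
      (∀ (u v : Mˣ) (x : S), a (u * v) x = a u (a v x)) := by

  classical
  obtain ⟨hcl, hone, hunitR, hmcm⟩ := hS
  obtain ⟨s₀, hs₀, v₀, hv₀, hsv₀⟩ := Set.mem_mul.mp hone
  -- every unit lies in S * M*
  have hT_units : ∀ w : M, IsUnit w → w ∈ S * UnitsSet M := by
    intro w hw
    have : s₀ * (v₀ * w) = w := by rw [← mul_assoc, hsv₀, one_mul]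
    exact Set.mem_mul.mpr ⟨s₀, hs₀, v₀ * w, hv₀.mul hw, this⟩
  -- associated elements of S coincide
  have hassoc : ∀ x₁ ∈ S, ∀ x₂ ∈ S, ∀ w : M, IsUnit w → x₁ = x₂ * w → x₁ = x₂ := by
    intro x₁ hx₁ x₂ hx₂ w hw heq
    by_contra hne
    have hTeq : (S \ {x₁}) * UnitsSet M = S * UnitsSet M := by
      apply Set.Subset.antisymm
      · exact Set.mul_subset_mul_right Set.diff_subset
      · intro a ha
        obtain ⟨s, hs, v, hv, hsv⟩ := Set.mem_mul.mp ha
        by_cases hsx : s = x₁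
        · subst hsx
          refine Set.mem_mul.mpr ⟨x₂, ⟨hx₂, ?_⟩, w * v, hw.mul hv, ?_⟩
          · simp only [Set.mem_singleton_iff]
            exact fun h => hne h.symm
          · rw [← mul_assoc, ← heq, hsv]
        · exact Set.mem_mul.mpr ⟨s, ⟨hs, hsx⟩, v, hv, hsv⟩
    have hq : QuasiSpans (S \ {x₁}) := by
      unfold QuasiSpans
      rw [hTeq]
      exact ⟨hcl, hone, hunitR, hmcm⟩
    have heqS := hmin _ Set.diff_subset hq
    have : x₁ ∈ S \ {x₁} := by rw [heqS]; exact hx₁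
    exact this.2 rfl
  -- existence
  have hex : ∀ x ∈ S, ∀ u : M, IsUnit u →
      ∃ p : M × M, p.1 ∈ S ∧ IsUnit p.2 ∧ u * x = p.1 * p.2 := by
    intro x hx u hu
    obtain ⟨U, rfl⟩ := hu
    have hxT : x ∈ S * UnitsSet M := Set.mem_mul.mpr ⟨x, hx, 1, isUnit_one, mul_one x⟩
    have hUT : (↑U⁻¹ : M) ∈ S * UnitsSet M := hT_units _ (Units.isUnit _)
    obtain ⟨x', hx'T, y', hy'T, hxy, d, hd⟩ :=
      hmcm x hxT (↑U⁻¹ : M) hUT x ⟨1, (mul_one x).symm⟩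
        ⟨↑U * x, by rw [← mul_assoc]; simp⟩
    have h1 : x * (y' * d) = x * 1 := by rw [← mul_assoc, mul_one]; exact hd.symm
    have h2 : y' * d = 1 := hl _ _ _ h1
    have h3 : y' * (d * y') = y' * 1 := by rw [← mul_assoc, h2, one_mul, mul_one]
    have h4 : d * y' = 1 := hl _ _ _ h3
    obtain ⟨Y, rfl⟩ : IsUnit y' := ⟨⟨y', d, h2, h4⟩, rfl⟩
    have hx'eq : x' = ↑U * x * (↑Y : M) := by
      rw [mul_assoc, hxy, ← mul_assoc]; simp
    obtain ⟨s, hs, v, hv, hsv⟩ := Set.mem_mul.mp hx'T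
    refine ⟨(s, v * (↑Y⁻¹ : M)), hs, hv.mul (Units.isUnit _), ?_⟩
    have : ↑U * x = x' * (↑Y⁻¹ : M) := by rw [hx'eq, mul_assoc]; simp
    rw [this, ← hsv, mul_assoc]
  -- key: existence and uniqueness
  have key : ∀ x ∈ S, ∀ u : M, IsUnit u →
      ∃! p : M × M, p.1 ∈ S ∧ IsUnit p.2 ∧ u * x = p.1 * p.2 := by
    intro x hx u hu
    obtain ⟨p, hp1, hp2, hp3⟩ := hex x hx u hu
    refine ⟨p, ⟨hp1, hp2, hp3⟩, ?_⟩
    intro q hq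
    obtain ⟨hq1, hq2, hq3⟩ := hq
    obtain ⟨Q2, hQ2⟩ := hq2
    have heq : q.1 * q.2 = p.1 * p.2 := by rw [← hq3, ← hp3]
    have hq1p1 : q.1 = p.1 * (p.2 * (↑Q2⁻¹ : M)) := by
      rw [← mul_assoc, ← heq, mul_assoc, ← hQ2]; simp
    have hq1eq : q.1 = p.1 :=
      hassoc q.1 hq1 p.1 hp1 _ (hp2.mul (Units.isUnit _)) hq1p1
    rw [hq1eq] at heq
    have hq2eq : q.2 = p.2 := hl p.1 _ _ heq
    exact Prod.ext hq1eq hq2eq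
  refine ⟨key, ?_⟩
  -- the action
  set f : Mˣ → S → M × M := fun u x => Classical.choose (key x x.2 u u.isUnit) with hf_def
  have hf : ∀ (u : Mˣ) (x : S), (f u x).1 ∈ S ∧ IsUnit (f u x).2 ∧
      (↑u : M) * ↑x = (f u x).1 * (f u x).2 :=
    fun u x => (Classical.choose_spec (key x x.2 u u.isUnit)).1
  have hfu : ∀ (u : Mˣ) (x : S) (p : M × M), p.1 ∈ S → IsUnit p.2 →
      (↑u : M) * ↑x = p.1 * p.2 → p = f u x :=
    fun u x p h1 h2 h3 =>
      (Classical.choose_spec (key x x.2 u u.isUnit)).2 p ⟨h1, h2, h3⟩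
  refine ⟨fun u x => ⟨(f u x).1, (hf u x).1⟩, ?_, ?_, ?_⟩
  · intro u x
    obtain ⟨U', hU'⟩ := (hf u x).2.1
    exact ⟨U', by rw [hU']; exact (hf u x).2.2⟩
  · intro x
    have h := hfu 1 x (↑x, 1) x.2 isUnit_one (by simp)
    exact Subtype.ext (congrArg Prod.fst h).symm
  · intro u v x
    have hp := hf v x
    have hq := hf u ⟨(f v x).1, hp.1⟩
    have hq22 : (↑u : M) * (f v x).1 =
        (f u ⟨(f v x).1, hp.1⟩).1 * (f u ⟨(f v x).1, hp.1⟩).2 := hq.2.2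
    have heq : (↑(u * v) : M) * ↑x = (f u ⟨(f v x).1, hp.1⟩).1 *
        ((f u ⟨(f v x).1, hp.1⟩).2 * (f v x).2) := by
      calc (↑(u * v) : M) * ↑x = ↑u * ((↑v : M) * ↑x) := by push_cast; rw [mul_assoc]
        _ = ↑u * ((f v x).1 * (f v x).2) := by rw [hp.2.2]
        _ = (↑u * (f v x).1) * (f v x).2 := by rw [mul_assoc]
        _ = ((f u ⟨(f v x).1, hp.1⟩).1 * (f u ⟨(f v x).1, hp.1⟩).2) * (f v x).2 := by
            rw [hq22]
        _ = _ := by rw [mul_assoc]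
    have h := hfu (u * v) x ((f u ⟨(f v x).1, hp.1⟩).1,
        (f u ⟨(f v x).1, hp.1⟩).2 * (f v x).2) hq.1 (hq.2.1.mul hp.2.1) heq
    exact Subtype.ext (congrArg Prod.fst h).symm
end

section
/- A monoid M is quasi-atomic if and only if there exists a mapping l from M to the natural numbers such that l(x) = 0 implies x is a unit, and l(xy) \geq l(x) + l(y) for all x, y. -/
open scoped Pointwise

variable {M : Type*} [Monoid M]

/-- `M` is quasi-atomic: every non-unit is a product of atoms, with a finite bound
on the number of atoms in any such decomposition. -/
def QuasiAtomic (N : Type*) [Monoid N] : Prop :=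
  ∀ x : N, ¬ IsUnit x →
    (∃ L : List N, L ≠ [] ∧ (∀ a ∈ L, IsAtomM a) ∧ L.prod = x) ∧
    ∃ B : ℕ, ∀ L : List N, (∀ a ∈ L, IsAtomM a) → L.prod = x → L.length ≤ B

lemma unit_mul_atom {a : M} (u : Mˣ) (ha : IsAtomM a) : IsAtomM (↑u * a) := by
  refine ⟨fun h => ha.1 ?_, fun y z hyz => ?_⟩
  · have he : a = ↑u⁻¹ * (↑u * a) := by rw [← mul_assoc]; simp
    rw [he]; exact (u⁻¹).isUnit.mul h
  · have he : a = (↑u⁻¹ * y) * z := by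
      rw [mul_assoc, ← hyz, ← mul_assoc]; simp
    rcases ha.2 _ _ he with h | h
    · left
      have hy : y = ↑u * (↑u⁻¹ * y) := by rw [← mul_assoc]; simp
      rw [hy]; exact u.isUnit.mul h
    · right; exact h

lemma atom_mul_unit {a : M} (ha : IsAtomM a) (u : Mˣ) : IsAtomM (a * ↑u) := by
  refine ⟨fun h => ha.1 ?_, fun y z hyz => ?_⟩
  · have he : a = (a * ↑u) * ↑u⁻¹ := by rw [mul_assoc]; simp
    rw [he]; exact h.mul (u⁻¹).isUnit
  · have he : a = y * (z * ↑u⁻¹) := by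
      rw [← mul_assoc, ← hyz, mul_assoc]; simp
    rcases ha.2 _ _ he with h | h
    · left; exact h
    · right
      have hz : z = (z * ↑u⁻¹) * ↑u := by rw [mul_assoc]; simp
      rw [hz]; exact h.mul u.isUnit

lemma list_mul_unit {L : List M} (hL : L ≠ []) (hA : ∀ a ∈ L, IsAtomM a) (u : Mˣ) :
    ∃ L' : List M, L'.length = L.length ∧ (∀ a ∈ L', IsAtomM a) ∧
      L'.prod = L.prod * ↑u := by
  induction L with
  | nil => exact absurd rfl hL
  | cons a t ih =>
    rcases eq_or_ne t [] with rfl | ht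
    · exact ⟨[a * ↑u], rfl, by simpa using atom_mul_unit (hA a (by simp)) u, by simp⟩
    · obtain ⟨t', h1, h2, h3⟩ := ih ht (fun b hb => hA b (List.mem_cons_of_mem _ hb))
      refine ⟨a :: t', by simp [h1], ?_, by simp [h3, mul_assoc]⟩
      intro b hb
      rcases List.mem_cons.mp hb with rfl | hb
      · exact hA b (by simp)
      · exact h2 b hb

lemma list_unit_mul {L : List M} (hL : L ≠ []) (hA : ∀ a ∈ L, IsAtomM a) (u : Mˣ) :
    ∃ L' : List M, L'.length = L.length ∧ (∀ a ∈ L', IsAtomM a) ∧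
      L'.prod = ↑u * L.prod := by
  match L with
  | [] => exact absurd rfl hL
  | a :: t =>
    refine ⟨(↑u * a) :: t, by simp, ?_, by simp [mul_assoc]⟩
    intro b hb
    rcases List.mem_cons.mp hb with rfl | hb
    · exact unit_mul_atom u (hA a (by simp))
    · exact hA b (List.mem_cons_of_mem _ hb)

lemma nonunit_mul_nonunit (hM : QuasiAtomic M) {x y : M} (hx : ¬IsUnit x)
    (hy : ¬IsUnit y) : ¬IsUnit (x * y) := by
  intro h
  obtain ⟨u, hu⟩ := h
  obtain ⟨⟨L, hLne, hLa, hLp⟩, B, hB⟩ := hM x hx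
  obtain ⟨⟨K, hKne, hKa, hKp⟩, -⟩ := hM y hy
  obtain ⟨K', hK'len, hK'a, hK'p⟩ := list_mul_unit hKne hKa u⁻¹
  have hK'ne : 1 ≤ K'.length := by
    rw [hK'len]
    exact List.length_pos_iff.mpr hKne
  have key : ∀ n : ℕ, ∃ L'' : List M,
      (∀ a ∈ L'', IsAtomM a) ∧ L''.prod = x ∧ n ≤ L''.length := by
    intro n
    induction n with
    | zero => exact ⟨L, hLa, hLp, Nat.zero_le _⟩
    | succ n ih =>
      obtain ⟨L'', h1, h2, h3⟩ := ih
      refine ⟨L'' ++ K' ++ L, ?_, ?_, ?_⟩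
      · intro b hb
        simp only [List.mem_append] at hb
        rcases hb with (hb | hb) | hb
        exacts [h1 b hb, hK'a b hb, hLa b hb]
      · rw [List.prod_append, List.prod_append, h2, hK'p, hKp, hLp]
        calc x * (y * ↑u⁻¹) * x = (x * y) * ↑u⁻¹ * x := by rw [mul_assoc x y]
          _ = x := by rw [← hu]; simp
      · simp only [List.length_append]
        omega
  obtain ⟨L'', h1, h2, h3⟩ := key (B + 1)
  exact absurd (hB L'' h1 h2) (by omega)

lemma length_le_l {l : M → ℕ} (h0 : ∀ x : M, l x = 0 → IsUnit x)
    (hadd : ∀ x y : M, l x + l y ≤ l (x * y)) :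
    ∀ L : List M, (∀ a ∈ L, ¬IsUnit a) → L.length ≤ l L.prod := by
  intro L
  induction L with
  | nil => simp
  | cons a t ih =>
    intro h
    have h1 : 1 ≤ l a := by
      rcases Nat.eq_zero_or_pos (l a) with h' | h'
      · exact absurd (h0 a h') (h a (by simp))
      · exact h'
    have h2 := hadd a t.prod
    have h3 := ih (fun b hb => h b (List.mem_cons_of_mem _ hb))
    simp only [List.prod_cons, List.length_cons]
    omega

lemma exists_decomp {l : M → ℕ} (h0 : ∀ x : M, l x = 0 → IsUnit x)
    (hadd : ∀ x y : M, l x + l y ≤ l (x * y)) :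
    ∀ n : ℕ, ∀ x : M, l x ≤ n → ¬IsUnit x →
      ∃ L : List M, L ≠ [] ∧ (∀ a ∈ L, IsAtomM a) ∧ L.prod = x := by
  intro n
  induction n with
  | zero => exact fun x hx hxu => absurd (h0 x (Nat.le_zero.mp hx)) hxu
  | succ n ih =>
    intro x hx hxu
    by_cases hat : IsAtomM x
    · exact ⟨[x], by simp, by simpa, by simp⟩
    · unfold IsAtomM at hat
      push_neg at hat
      obtain ⟨y, z, hyz, hyu, hzu⟩ := hat hxu
      have hly : 1 ≤ l y := by
        rcases Nat.eq_zero_or_pos (l y) with h' | h'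
        · exact absurd (h0 y h') hyu
        · exact h'
      have hlz : 1 ≤ l z := by
        rcases Nat.eq_zero_or_pos (l z) with h' | h'
        · exact absurd (h0 z h') hzu
        · exact h'
      have hsum := hadd y z
      rw [← hyz] at hsum
      obtain ⟨Ly, hLyne, hLya, hLyp⟩ := ih y (by omega) hyu
      obtain ⟨Lz, hLzne, hLza, hLzp⟩ := ih z (by omega) hzu
      refine ⟨Ly ++ Lz, by simp [hLyne], ?_, ?_⟩
      · intro b hb
        rcases List.mem_append.mp hb with hb | hb
        exacts [hLya b hb, hLza b hb]
      · rw [List.prod_append, hLyp, hLzp, hyz]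

theorem stmt10 :
    QuasiAtomic M ↔
      ∃ l : M → ℕ, (∀ x : M, l x = 0 → IsUnit x) ∧
        ∀ x y : M, l x + l y ≤ l (x * y) := by
  constructor
  · intro hM
    classical
    set D : M → Set ℕ := fun x =>
      {n | ∃ L : List M, (∀ a ∈ L, IsAtomM a) ∧ L.prod = x ∧ L.length = n} with hD
    have hne : ∀ x : M, ¬IsUnit x → (D x).Nonempty := by
      intro x hx
      obtain ⟨⟨L, hLne, hLa, hLp⟩, -⟩ := hM x hx
      exact ⟨L.length, L, hLa, hLp, rfl⟩
    have hbdd : ∀ x : M, ¬IsUnit x → BddAbove (D x) := by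
      intro x hx
      obtain ⟨-, B, hB⟩ := hM x hx
      exact ⟨B, fun n ⟨L, hLa, hLp, hLl⟩ => hLl ▸ hB L hLa hLp⟩
    refine ⟨fun x => if h : IsUnit x then 0 else sSup (D x), ?_, ?_⟩
    · intro x hx
      by_contra hxu
      dsimp only at hx
      rw [dif_neg hxu] at hx
      have hmem := Nat.sSup_mem (hne x hxu) (hbdd x hxu)
      rw [hx] at hmem
      obtain ⟨L, hLa, hLp, hLl⟩ := hmem
      rw [List.length_eq_zero_iff.mp hLl] at hLp
      exact hxu (hLp ▸ isUnit_one)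
    · intro x y
      dsimp only
      by_cases hx : IsUnit x <;> by_cases hy : IsUnit y
      · rw [dif_pos hx, dif_pos hy]
        simp
      · have hxy : ¬IsUnit (x * y) := by
          intro h
          obtain ⟨u, hu⟩ := hx
          have : y = ↑u⁻¹ * (x * y) := by rw [← mul_assoc, ← hu]; simp
          exact hy (this ▸ (u⁻¹).isUnit.mul h)
        rw [dif_pos hx, dif_neg hy, dif_neg hxy, zero_add]
        have hmem := Nat.sSup_mem (hne y hy) (hbdd y hy)
        obtain ⟨L, hLa, hLp, hLl⟩ := hmem
        have hLne : L ≠ [] := by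
          intro h
          rw [h] at hLp
          exact hy (hLp ▸ isUnit_one)
        obtain ⟨L', h1, h2, h3⟩ := list_unit_mul hLne hLa hx.unit
        refine le_csSup (hbdd _ hxy) ⟨L', h2, ?_, by rw [h1, hLl]⟩
        rw [h3, hLp, IsUnit.unit_spec]
      · have hxy : ¬IsUnit (x * y) := by
          intro h
          obtain ⟨u, hu⟩ := hy
          have : x = (x * y) * ↑u⁻¹ := by rw [mul_assoc, ← hu]; simp
          exact hx (this ▸ h.mul (u⁻¹).isUnit)
        rw [dif_neg hx, dif_pos hy, dif_neg hxy, add_zero]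
        have hmem := Nat.sSup_mem (hne x hx) (hbdd x hx)
        obtain ⟨L, hLa, hLp, hLl⟩ := hmem
        have hLne : L ≠ [] := by
          intro h
          rw [h] at hLp
          exact hx (hLp ▸ isUnit_one)
        obtain ⟨L', h1, h2, h3⟩ := list_mul_unit hLne hLa hy.unit
        refine le_csSup (hbdd _ hxy) ⟨L', h2, ?_, by rw [h1, hLl]⟩
        rw [h3, hLp, IsUnit.unit_spec]
      · have hxy := nonunit_mul_nonunit hM hx hy
        rw [dif_neg hx, dif_neg hy, dif_neg hxy]
        obtain ⟨L, hLa, hLp, hLl⟩ := Nat.sSup_mem (hne x hx) (hbdd x hx)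
        obtain ⟨K, hKa, hKp, hKl⟩ := Nat.sSup_mem (hne y hy) (hbdd y hy)
        refine le_csSup (hbdd _ hxy) ⟨L ++ K, ?_, ?_, ?_⟩
        · intro b hb
          rcases List.mem_append.mp hb with hb | hb
          exacts [hLa b hb, hKa b hb]
        · rw [List.prod_append, hLp, hKp]
        · rw [List.length_append, hLl, hKl]
  · rintro ⟨l, h0, hadd⟩
    intro x hx
    constructor
    · exact exists_decomp h0 hadd (l x) x le_rfl hx
    · refine ⟨l x, fun L hLa hLp => ?_⟩
      have := length_le_l h0 hadd L (fun a ha => (hLa a ha).1)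
      rwa [hLp] at this
end

section
/- Every thin cancellative monoid is quasi-atomic. -/
open scoped Pointwise

variable {M : Type*} [Monoid M]

/-! Let `l z` be the largest number of nonunit factors in a factorization of `z`. Concatenating
factorizations makes `l` superadditive, and `l z = 0` only for units, so everything rests on
`l z` being finite.

Fix an `S`-word `L` with product `z` and any `S`-word `T` with the same product. Pushing the
first letter `s` of `L` through `T` by common right multiples inside `S` yields an `S`-word `V`
with `s * V.prod = T.prod`. Along a stretch where the letters of `V` are units, each nonunit
letter of `T` moves the current element `u ∈ S` through a nonunit; since the units lie in the
finite set `S`, `g w = a g` with `w` a unit forces `a` to be a unit, so the elements of `S` met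
before these nonunit letters are distinct. Hence `#T ≤ (|S| + 1) #V + |S|`, and induction on `L`
gives `#T < (|S| + 1) ^ #L`. -/

open Classical in
noncomputable def nonunitCount (L : List M) : ℕ := L.countP fun a => ¬ IsUnit a

@[simp]
lemma nonunitCount_nil : nonunitCount ([] : List M) = 0 := rfl

lemma nonunitCount_cons_of_isUnit {a : M} (ha : IsUnit a) (L : List M) :
    nonunitCount (a :: L) = nonunitCount L := by
  simp [nonunitCount, ha]

lemma nonunitCount_cons_of_not_isUnit {a : M} (ha : ¬ IsUnit a) (L : List M) :
    nonunitCount (a :: L) = nonunitCount L + 1 := by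
  simp [nonunitCount, ha]

lemma nonunitCount_cons_le (a : M) (L : List M) :
    nonunitCount (a :: L) ≤ nonunitCount L + 1 := by
  by_cases ha : IsUnit a
  · simp [nonunitCount_cons_of_isUnit ha]
  · simp [nonunitCount_cons_of_not_isUnit ha]

lemma nonunitCount_append (L₁ L₂ : List M) :
    nonunitCount (L₁ ++ L₂) = nonunitCount L₁ + nonunitCount L₂ := by
  simp [nonunitCount]

section DedekindFinite

variable [IsDedekindFiniteMonoid M]

lemma isUnit_prod_iff {L : List M} : IsUnit L.prod ↔ ∀ a ∈ L, IsUnit a := by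
  induction L with
  | nil => simp
  | cons a L ih => simp [IsUnit.mul_iff, ih]

lemma nonunitCount_eq_zero_iff {L : List M} : nonunitCount L = 0 ↔ IsUnit L.prod := by
  simp [nonunitCount, isUnit_prod_iff]

lemma nonunitCount_singleton_prod_le (L : List M) : nonunitCount [L.prod] ≤ nonunitCount L := by
  by_cases h : IsUnit L.prod
  · simp [nonunitCount_cons_of_isUnit h]
  · rw [nonunitCount_cons_of_not_isUnit h, nonunitCount_nil]
    exact Nat.pos_of_ne_zero (nonunitCount_eq_zero_iff.not.2 h)

end DedekindFinite

def factorizationLengths (z : M) : Set ℕ :=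
  {n | ∃ P : List M, P.prod = z ∧ nonunitCount P = n}

noncomputable def maxFactorizationLength (z : M) : ℕ := sSup (factorizationLengths z)

lemma nonunitCount_le_maxFactorizationLength {P : List M}
    (hbdd : BddAbove (factorizationLengths P.prod)) :
    nonunitCount P ≤ maxFactorizationLength P.prod :=
  le_csSup hbdd ⟨P, rfl, rfl⟩

lemma exists_nonunitCount_eq_maxFactorizationLength {z : M}
    (hbdd : BddAbove (factorizationLengths z)) :
    ∃ P : List M, P.prod = z ∧ nonunitCount P = maxFactorizationLength z :=
  Nat.sSup_mem (s := factorizationLengths z) ⟨_, [z], List.prod_singleton, rfl⟩ hbdd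

lemma isUnit_of_maxFactorizationLength_eq_zero {z : M} (hbdd : BddAbove (factorizationLengths z))
    (h : maxFactorizationLength z = 0) : IsUnit z := by
  by_contra hz
  have := nonunitCount_le_maxFactorizationLength (P := [z]) (by rwa [List.prod_singleton])
  rw [List.prod_singleton, h, nonunitCount_cons_of_not_isUnit hz] at this
  omega

lemma maxFactorizationLength_add_le (hbdd : ∀ z : M, BddAbove (factorizationLengths z))
    (x y : M) :
    maxFactorizationLength x + maxFactorizationLength y ≤ maxFactorizationLength (x * y) := by
  obtain ⟨P, rfl, hP⟩ := exists_nonunitCount_eq_maxFactorizationLength (hbdd x)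
  obtain ⟨Q, rfl, hQ⟩ := exists_nonunitCount_eq_maxFactorizationLength (hbdd y)
  rw [← hP, ← hQ, ← nonunitCount_append, ← List.prod_append]
  exact nonunitCount_le_maxFactorizationLength (hbdd _)

lemma exists_list_prod_eq_nonunitCount_le [IsDedekindFiniteMonoid M] {S : Set M}
    (hS : Submonoid.closure S = ⊤) (P : List M) :
    ∃ T : List M, (∀ t ∈ T, t ∈ S) ∧ T.prod = P.prod ∧
      nonunitCount P ≤ nonunitCount T := by
  induction P with
  | nil => exact ⟨[], by simp, rfl, le_rfl⟩
  | cons a P ih =>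
    obtain ⟨T, hT, hTP, hle⟩ := ih
    obtain ⟨Ta, hTa, rfl⟩ := Submonoid.exists_list_of_mem_closure (hS ▸ Submonoid.mem_top a)
    refine ⟨Ta ++ T, List.forall_mem_append.2 ⟨hTa, hT⟩, by simp [hTP], ?_⟩
    rw [← List.singleton_append, nonunitCount_append, nonunitCount_append]
    exact add_le_add (nonunitCount_singleton_prod_le Ta) hle

def ReachesThroughNonunit (g u : M) : Prop :=
  ∃ a w : M, ¬ IsUnit a ∧ IsUnit w ∧ g * w = a * u

lemma ReachesThroughNonunit.trans_mul_eq [IsDedekindFiniteMonoid M] {g u t y u' : M}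
    (h : ReachesThroughNonunit g u) (hy : IsUnit y) (heq : u * y = t * u') :
    ReachesThroughNonunit g u' := by
  obtain ⟨a, w, ha, hw, hgw⟩ := h
  exact ⟨a * t, w * y, fun h => ha (IsUnit.mul_iff.1 h).1, hw.mul hy,
    by rw [← mul_assoc, hgw, mul_assoc, heq, mul_assoc]⟩

lemma not_reachesThroughNonunit_self [IsRightCancelMul M] [Finite Mˣ] (g : M) :
    ¬ ReachesThroughNonunit g g := by
  rintro ⟨a, _, ha, ⟨w, rfl⟩, h⟩
  have hn : Nat.card Mˣ ≠ 0 := Nat.card_pos.ne'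
  have hg : a ^ Nat.card Mˣ * g = 1 * g := by
    rw [one_mul, ← (SemiconjBy.pow_right h _).eq, ← Units.val_pow_eq_pow_val, pow_card_eq_one',
      Units.val_one, mul_one]
  exact ha ((isUnit_pow_iff hn).1 (mul_right_cancel hg ▸ isUnit_one))

namespace Spans

lemma unit_mem {S : Set M} (hS : Spans S) {u : M} (hu : IsUnit u) : u ∈ S := by
  simpa using hS.2.2.1 1 hS.2.1 u hu

lemma finite_units {S : Set M} (hS : Spans S) (hfin : S.Finite) : Finite Mˣ :=
  have := hfin.to_subtype
  Finite.of_injective (fun u : Mˣ => (⟨u, hS.unit_mem u.isUnit⟩ : S))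
    fun _ _ h => Units.ext (congrArg Subtype.val h)

lemma exists_lcm_step [IsLeftCancelMul M] {S : Set M} (hS : Spans S) {u t w : M} (hu : u ∈ S)
    (ht : t ∈ S) (h : LDvd u (t * w)) :
    ∃ u' ∈ S, ∃ y ∈ S, u * y = t * u' ∧ LDvd u' w := by
  obtain ⟨u', hu', y, hy, heq, d, hd⟩ := hS.2.2.2 u hu t ht _ h ⟨w, rfl⟩
  refine ⟨u', hu', y, hy, heq, d, mul_left_cancel (a := t) ?_⟩
  rw [hd, heq, mul_assoc]

variable [IsCancelMul M] {S : Finset M}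

-- `A` collects the earlier elements of `S` in the current stretch of unit letters of `V` that
-- faced a nonunit letter of `T`; they all reach `u`, so `u` is new whenever it faces one too.
theorem exists_quotient_word (hS : Spans (S : Set M)) (T : List M) (hT : ∀ t ∈ T, t ∈ S) :
    ∀ (u : M) (A : Finset M), A ⊆ S →
      (∀ g ∈ A, ReachesThroughNonunit g u) → u ∈ S → LDvd u T.prod →
      ∃ V : List M, (∀ v ∈ V, v ∈ S) ∧ u * V.prod = T.prod ∧
        nonunitCount T + A.card ≤ (S.card + 1) * nonunitCount V + S.card := by
  classical
  have : Finite Mˣ := hS.finite_units S.finite_toSet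
  induction T with
  | nil =>
    rintro u A hA - - ⟨c, hc⟩
    have hu : IsUnit u := .of_mul_eq_one c hc.symm
    refine ⟨[↑hu.unit⁻¹], by simpa using hS.unit_mem (Units.isUnit _), by simp, ?_⟩
    simpa [nonunitCount_cons_of_isUnit (Units.isUnit _)] using Finset.card_le_card hA
  | cons t T ih =>
    intro u A hA hAu hu hdvd
    rw [List.forall_mem_cons] at hT
    rw [List.prod_cons] at hdvd
    obtain ⟨u', hu', y, hy, heq, hdvd'⟩ := hS.exists_lcm_step hu hT.1 hdvd
    have hmem (V : List M) (hV : ∀ v ∈ V, v ∈ S) : ∀ v ∈ y :: V, v ∈ S :=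
      List.forall_mem_cons.2 ⟨hy, hV⟩
    have hprod (V : List M) (hV : u' * V.prod = T.prod) : u * (y :: V).prod = (t :: T).prod := by
      rw [List.prod_cons, List.prod_cons, ← mul_assoc, heq, mul_assoc, hV]
    by_cases hyu : IsUnit y
    · have hAu' : ∀ g ∈ A, ReachesThroughNonunit g u' := fun g hg =>
        (hAu g hg).trans_mul_eq hyu heq
      by_cases htu : IsUnit t
      · obtain ⟨V, hV, hVprod, hcount⟩ := ih hT.2 u' A hA hAu' hu' hdvd'
        refine ⟨y :: V, hmem V hV, hprod V hVprod, ?_⟩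
        rwa [nonunitCount_cons_of_isUnit htu, nonunitCount_cons_of_isUnit hyu]
      · have huA : u ∉ A := fun huA => not_reachesThroughNonunit_self u (hAu u huA)
        obtain ⟨V, hV, hVprod, hcount⟩ := ih hT.2 u' (insert u A) (Finset.insert_subset hu hA)
          (Finset.forall_mem_insert _ _ _ |>.2 ⟨⟨t, y, htu, hyu, heq⟩, hAu'⟩) hu' hdvd'
        refine ⟨y :: V, hmem V hV, hprod V hVprod, ?_⟩
        rw [Finset.card_insert_of_notMem huA] at hcount
        rw [nonunitCount_cons_of_not_isUnit htu, nonunitCount_cons_of_isUnit hyu]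
        omega
    · obtain ⟨V, hV, hVprod, hcount⟩ :=
        ih hT.2 u' ∅ (Finset.empty_subset _) (by simp) hu' hdvd'
      refine ⟨y :: V, hmem V hV, hprod V hVprod, ?_⟩
      have := Finset.card_le_card hA
      have := nonunitCount_cons_le t T
      rw [Finset.card_empty] at hcount
      rw [nonunitCount_cons_of_not_isUnit hyu]
      linarith

theorem nonunitCount_lt_pow (hS : Spans (S : Set M)) (L : List M) (hL : ∀ a ∈ L, a ∈ S) :
    ∀ T : List M, (∀ t ∈ T, t ∈ S) → L.prod = T.prod →
      nonunitCount T < (S.card + 1) ^ nonunitCount L := by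
  induction L with
  | nil =>
    intro T _ h
    have hT : IsUnit T.prod := h ▸ isUnit_one
    simp [nonunitCount_eq_zero_iff.2 hT]
  | cons s L ih =>
    intro T hT h
    rw [List.forall_mem_cons] at hL
    rw [List.prod_cons] at h
    by_cases hs : IsUnit s
    · have := ih hL.2 (↑hs.unit⁻¹ :: T)
        (List.forall_mem_cons.2 ⟨hS.unit_mem (hs.unit⁻¹).isUnit, hT⟩)
        (by rw [List.prod_cons, ← h, ← mul_assoc, IsUnit.val_inv_mul, one_mul])
      rw [nonunitCount_cons_of_isUnit hs]
      rwa [nonunitCount_cons_of_isUnit (hs.unit⁻¹).isUnit] at this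
    · obtain ⟨V, hV, hVprod, hcount⟩ :=
        hS.exists_quotient_word T hT s ∅ (Finset.empty_subset _) (by simp) hL.1 ⟨L.prod, h.symm⟩
      have hVL := ih hL.2 V hV (mul_left_cancel (hVprod.trans h.symm)).symm
      rw [Finset.card_empty] at hcount
      rw [nonunitCount_cons_of_not_isUnit hs, pow_succ']
      calc nonunitCount T < (S.card + 1) * (nonunitCount V + 1) := by linarith
        _ ≤ (S.card + 1) * (S.card + 1) ^ nonunitCount L := Nat.mul_le_mul_left _ hVL

theorem bddAbove_factorizationLengths (hS : Spans (S : Set M)) (z : M) :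
    BddAbove (factorizationLengths z) := by
  obtain ⟨L, hL, rfl⟩ := Submonoid.exists_list_of_mem_closure (hS.1 ▸ Submonoid.mem_top z)
  refine ⟨(S.card + 1) ^ nonunitCount L, ?_⟩
  rintro n ⟨P, hP, rfl⟩
  obtain ⟨T, hT, hTP, hle⟩ := exists_list_prod_eq_nonunitCount_le hS.1 P
  exact hle.trans (hS.nonunitCount_lt_pow L hL T hT (hTP.trans hP).symm).le

end Spans

theorem stmt11
    (hl : ∀ a b c : M, a * b = a * c → b = c)
    (hr : ∀ a b c : M, b * a = c * a → b = c)
    (hthin : ∃ S : Set M, S.Finite ∧ Spans S) :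
    ∃ l : M → ℕ, (∀ x : M, l x = 0 → IsUnit x) ∧
      ∀ x y : M, l x + l y ≤ l (x * y) := by
  have : IsCancelMul M :=
    { mul_left_cancel := fun a _ _ => hl a _ _
      mul_right_cancel := fun a _ _ => hr a _ _ }
  obtain ⟨S, hSfin, hS⟩ := hthin
  lift S to Finset M using hSfin
  have hbdd := hS.bddAbove_factorizationLengths
  exact ⟨maxFactorizationLength, fun x => isUnit_of_maxFactorizationLength_eq_zero (hbdd x),
    maxFactorizationLength_add_le hbdd⟩
end

section
/- In a quasi-atomic cancellative monoid M, every common right multiple of two elements x and y is a right multiple of some mcm of x and y. -/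
open scoped Pointwise

variable {M : Type*} [Monoid M]

theorem stmt13
    (hl : ∀ a b c : M, a * b = a * c → b = c)
    (hr : ∀ a b c : M, b * a = c * a → b = c)
    (hqa : ∃ l : M → ℕ, (∀ x : M, l x = 0 → IsUnit x) ∧
      ∀ x y : M, l x + l y ≤ l (x * y)) :
    ∀ x y z : M, LDvd x z → LDvd y z → ∃ m : M, Mcm x y m ∧ LDvd m z := by
  obtain ⟨l, hl0, hladd⟩ := hqa
  intro x y z hx hy
  classical
  have hne : ∃ n, ∃ w : M, (LDvd x w ∧ LDvd y w ∧ LDvd w z) ∧ l w = n :=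
    ⟨l z, z, ⟨hx, hy, ⟨1, (mul_one z).symm⟩⟩, rfl⟩
  obtain ⟨w, ⟨hxw, hyw, hwz⟩, hlw⟩ := Nat.find_spec hne
  refine ⟨w, ⟨hxw, hyw, ?_⟩, hwz⟩
  rintro z' ⟨c, hc, hwc⟩ ⟨hxz', hyz'⟩
  have hz'z : LDvd z' z := by
    obtain ⟨d, hd⟩ := hwz
    exact ⟨c * d, by rw [hd, hwc, mul_assoc]⟩
  have hlc : 1 ≤ l c := by
    by_contra h
    exact hc (hl0 c (by omega))
  have hlt : l z' < Nat.find hne := by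
    have := hladd z' c
    rw [← hwc] at this
    omega
  exact Nat.find_min hne hlt ⟨z', ⟨hxz', hyz', hz'z⟩, rfl⟩
end

section
/- Assume M is a cancellative monoid and S quasi-spans M. Then every right divisor of an S-simple element of M is S-simple. -/
open scoped Pointwise

variable {M : Type*} [Monoid M]

theorem stmt16
    (hl : ∀ a b c : M, a * b = a * c → b = c)
    (hr : ∀ a b c : M, b * a = c * a → b = c)
    (S : Set M) (hS : QuasiSpans S) :
    ∀ x y : M, SSimple S (x * y) → SSimple S y := by
  intro x y hxy w hw heq
  obtain ⟨z, hz, hyz⟩ := hw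
  set T := S * UnitsSet M with hT
  obtain ⟨hcl, -, -, hlcm⟩ := hS
  have hST : ∀ s ∈ S, s ∈ T := by
    intro s hs
    simpa using Set.mul_mem_mul hs (show (1:M) ∈ UnitsSet M from isUnit_one)
  -- key claim by closure induction
  have Qone : ∀ s ∈ S, LDvd s ((1:M) * y) → LDvd s ((1:M) * w) := by
    intro s hs hd
    rw [one_mul] at hd ⊢
    have : s ∈ {d : M | LDvd d w} ∩ S := by rw [heq]; exact ⟨hd, hs⟩
    exact this.1
  have Qstep : ∀ t ∈ T, ∀ v : M,
      (∀ s ∈ S, LDvd s (v * y) → LDvd s (v * w)) →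
      (∀ s ∈ S, LDvd s (t * v * y) → LDvd s (t * v * w)) := by
    intro t ht v hQ s hs hd
    have htd : LDvd t (t * v * y) := ⟨v * y, by rw [mul_assoc]⟩
    obtain ⟨x', hx', y', hy', hcomm, c, hc⟩ :=
      hlcm s (hST s hs) t ht (t * v * y) hd htd
    -- hc : t * v * y = s * y' * c, hcomm : s * y' = t * x'
    have hvy : v * y = x' * c := by
      apply hl t
      rw [← mul_assoc t v y, hc, hcomm, mul_assoc]
    obtain ⟨s₀, hs₀, u, hu, hx'eq0⟩ := hx'
    have hx'eq : s₀ * u = x' := hx'eq0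
    obtain ⟨U, rfl⟩ := hu
    have hs₀vy : LDvd s₀ (v * y) := ⟨↑U * c, by rw [hvy, ← hx'eq, mul_assoc]⟩
    obtain ⟨c₁, hc₁⟩ := hQ s₀ hs₀ hs₀vy
    have hx'vw : LDvd x' (v * w) := by
      refine ⟨↑U⁻¹ * c₁, ?_⟩
      rw [hc₁, ← hx'eq, mul_assoc, Units.mul_inv_cancel_left]
    obtain ⟨d, hdw⟩ := hx'vw
    exact ⟨y' * d, by rw [mul_assoc, hdw, ← mul_assoc, ← hcomm, mul_assoc]⟩
  have hall : ∀ v : M, ∀ s ∈ S, LDvd s (v * y) → LDvd s (v * w) := by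
    intro v
    have hv : v ∈ Submonoid.closure T := by rw [hcl]; trivial
    have main : ∀ u : M, (∀ s ∈ S, LDvd s (u * y) → LDvd s (u * w)) →
        (∀ s ∈ S, LDvd s (v * u * y) → LDvd s (v * u * w)) := by
      induction hv using Submonoid.closure_induction with
      | mem t ht => exact fun u hu => Qstep t ht u hu
      | one => intro u hu; rw [one_mul]; exact hu
      | mul a b ha hb iha ihb =>
        intro u hu s hs hd
        have h1 : a * (b * u) = a * b * u := (mul_assoc a b u).symm
        have := iha (b * u) (ihb u hu) s hs (by rw [h1]; exact hd)
        rw [h1] at this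
        exact this
    intro s hs hd
    have := main 1 Qone s hs (by rw [mul_one]; exact hd)
    rw [mul_one] at this
    exact this
  refine hxy (x * w) ⟨z, hz, by rw [hyz, mul_assoc]⟩ ?_
  ext d
  simp only [Set.mem_inter_iff, Set.mem_setOf_eq]
  constructor
  · rintro ⟨⟨c, hc⟩, hdS⟩
    exact ⟨⟨c * z, by rw [hyz, ← mul_assoc, hc, mul_assoc]⟩, hdS⟩
  · rintro ⟨hd, hdS⟩
    exact ⟨hall x d hdS hd, hdS⟩
end

section
/- Assume M is a cancellative monoid and S is a quasi-spanning subset of M with n elements. Then every S-simple element of M belongs to S^n M^*; consequently there are at most n^n \simeq-equivalence classes of S-simple elements of M. -/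
open scoped Pointwise

variable {M : Type*} [Monoid M]

private lemma ldvd_trans {M : Type*} [Monoid M] {a b c : M} (h1 : LDvd a b) (h2 : LDvd b c) :
    LDvd a c := by
  obtain ⟨d, rfl⟩ := h1; obtain ⟨e, rfl⟩ := h2
  exact ⟨d * e, mul_assoc _ _ _⟩

private lemma ldvd_of_ldvd_mul_unit {M : Type*} [Monoid M] {a q u : M} (hu : IsUnit u)
    (h : LDvd a (q * u)) : LDvd a q := by
  obtain ⟨v, hv⟩ := hu.exists_right_inv
  obtain ⟨c, hc⟩ := h
  refine ⟨c * v, ?_⟩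
  calc q = q * (u * v) := by rw [hv, mul_one]
    _ = (q * u) * v := (mul_assoc _ _ _).symm
    _ = (a * c) * v := by rw [hc]
    _ = a * (c * v) := mul_assoc _ _ _

private lemma compL {M : Type*} [Monoid M]
    (hl : ∀ a b c : M, a * b = a * c → b = c)
    (S : Set M) (hS : QuasiSpans S) :
    ∀ (k : ℕ) (p : M), p ∈ S ^ k → ∀ t ∈ S * UnitsSet M, ∀ z : M, LDvd p z → LDvd t z →
      ∃ y' ∈ S * UnitsSet M, LDvd (p * y') z ∧ LDvd t (p * y') := by
  intro k
  induction k with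
  | zero =>
    intro p hp t ht z _ htz
    rw [pow_zero] at hp
    rw [Set.mem_one] at hp
    subst hp
    exact ⟨t, ht, by rwa [one_mul], ⟨1, by rw [one_mul, mul_one]⟩⟩
  | succ a ih =>
    intro p hp t ht z hpz htz
    rw [pow_succ'] at hp
    obtain ⟨x₁, hx₁, x₂, hx₂, rfl⟩ := Set.mem_mul.mp hp
    obtain ⟨c₀, rfl⟩ := hpz
    have hx₁z : LDvd x₁ (x₁ * x₂ * c₀) := ⟨x₂ * c₀, by rw [mul_assoc]⟩
    obtain ⟨x₁', hx₁', y₁', hy₁', heq, hdvd⟩ :=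
      hS.2.2.2 x₁ ⟨x₁, hx₁, 1, isUnit_one, mul_one x₁⟩ t ht _ hx₁z htz
    obtain ⟨c, hcx⟩ := hdvd
    have hz₁ : x₂ * c₀ = y₁' * c := hl x₁ _ _ (by rw [← mul_assoc, ← mul_assoc]; exact hcx)
    obtain ⟨y₂', hy₂'T, hdvd2, hdvd3⟩ := ih x₂ hx₂ y₁' hy₁' (x₂ * c₀) ⟨c₀, rfl⟩ ⟨c, hz₁⟩
    refine ⟨y₂', hy₂'T, ?_, ?_⟩
    · obtain ⟨e, he⟩ := hdvd2
      exact ⟨e, by rw [mul_assoc x₁ x₂ c₀, he]; simp only [mul_assoc]⟩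
    · obtain ⟨e, he⟩ := hdvd3
      exact ⟨x₁' * e, by rw [mul_assoc x₁ x₂ y₂', he, ← mul_assoc, heq]; simp only [mul_assoc]⟩

private lemma recL {M : Type*} [Monoid M]
    (hl : ∀ a b c : M, a * b = a * c → b = c)
    (S : Set M) (hS : QuasiSpans S) (hfin : S.Finite) (n : ℕ) (hcard : S.ncard = n)
    (x : M) (hx : SSimple S x) :
    ∀ (d k : ℕ) (p : M), p ∈ S ^ k → LDvd p x → k ≤ ({a : M | LDvd a p} ∩ S).ncard →
      n - ({a : M | LDvd a p} ∩ S).ncard ≤ d →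
      ∃ m, m ≤ n ∧ ∃ q ∈ S ^ m, ∃ u, IsUnit u ∧ x = q * u := by
  intro d
  induction d with
  | zero =>
    intro k p hp hpx hk hd
    obtain ⟨c, hc⟩ := hpx
    by_cases huc : IsUnit c
    · exact ⟨k, le_trans hk (hcard ▸ Set.ncard_le_ncard Set.inter_subset_right hfin),
        p, hp, c, huc, hc⟩
    · exfalso
      have hne := hx p ⟨c, huc, hc⟩
      have hsub : {a : M | LDvd a p} ∩ S ⊆ {a : M | LDvd a x} ∩ S :=
        fun a ha => ⟨ldvd_trans ha.1 ⟨c, hc⟩, ha.2⟩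
      obtain ⟨s, hsmem, hsp⟩ := Set.exists_of_ssubset (ssubset_of_subset_of_ne hsub hne)
      obtain ⟨hsx, hsS⟩ := hsmem
      obtain ⟨y', hy'T, hpy'x, hspy'⟩ :=
        compL hl S hS k p hp s ⟨s, hsS, 1, isUnit_one, mul_one s⟩ x ⟨c, hc⟩ hsx
      obtain ⟨s', hs'S, u', hu', rfl⟩ := hy'T
      have hsq : LDvd s (p * s') := by
        apply ldvd_of_ldvd_mul_unit (a := s) (q := p * s') (u := u') hu'
        rwa [mul_assoc]
      have hsubq : {a : M | LDvd a p} ∩ S ⊆ {a : M | LDvd a (p * s')} ∩ S :=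
        fun a ha => ⟨ldvd_trans ha.1 ⟨s', rfl⟩, ha.2⟩
      have hss : ({a : M | LDvd a p} ∩ S) ⊂ ({a : M | LDvd a (p * s')} ∩ S) :=
        (Set.ssubset_iff_of_subset hsubq).mpr ⟨s, ⟨hsq, hsS⟩, hsp⟩
      have hlt := Set.ncard_lt_ncard hss (hfin.subset Set.inter_subset_right)
      have hqn : ({a : M | LDvd a (p * s')} ∩ S).ncard ≤ n :=
        hcard ▸ Set.ncard_le_ncard Set.inter_subset_right hfin
      omega
  | succ d ih =>
    intro k p hp hpx hk hd
    obtain ⟨c, hc⟩ := hpx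
    by_cases huc : IsUnit c
    · exact ⟨k, le_trans hk (hcard ▸ Set.ncard_le_ncard Set.inter_subset_right hfin),
        p, hp, c, huc, hc⟩
    · have hne := hx p ⟨c, huc, hc⟩
      have hsub : {a : M | LDvd a p} ∩ S ⊆ {a : M | LDvd a x} ∩ S :=
        fun a ha => ⟨ldvd_trans ha.1 ⟨c, hc⟩, ha.2⟩
      obtain ⟨s, hsmem, hsp⟩ := Set.exists_of_ssubset (ssubset_of_subset_of_ne hsub hne)
      obtain ⟨hsx, hsS⟩ := hsmem
      obtain ⟨y', hy'T, hpy'x, hspy'⟩ :=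
        compL hl S hS k p hp s ⟨s, hsS, 1, isUnit_one, mul_one s⟩ x ⟨c, hc⟩ hsx
      obtain ⟨s', hs'S, u', hu', rfl⟩ := hy'T
      have hq : p * s' ∈ S ^ (k + 1) := by rw [pow_succ]; exact Set.mul_mem_mul hp hs'S
      have hqx : LDvd (p * s') x :=
        ldvd_trans ⟨u', (mul_assoc p s' u').symm⟩ hpy'x
      have hsq : LDvd s (p * s') := by
        apply ldvd_of_ldvd_mul_unit (a := s) (q := p * s') (u := u') hu'
        rwa [mul_assoc]
      have hsubq : {a : M | LDvd a p} ∩ S ⊆ {a : M | LDvd a (p * s')} ∩ S :=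
        fun a ha => ⟨ldvd_trans ha.1 ⟨s', rfl⟩, ha.2⟩
      have hss : ({a : M | LDvd a p} ∩ S) ⊂ ({a : M | LDvd a (p * s')} ∩ S) :=
        (Set.ssubset_iff_of_subset hsubq).mpr ⟨s, ⟨hsq, hsS⟩, hsp⟩
      have hlt := Set.ncard_lt_ncard hss (hfin.subset Set.inter_subset_right)
      have hqn : ({a : M | LDvd a (p * s')} ∩ S).ncard ≤ n :=
        hcard ▸ Set.ncard_le_ncard Set.inter_subset_right hfin
      exact ih (k + 1) (p * s') hq hqx (by omega) (by omega)

theorem stmt17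
    (hl : ∀ a b c : M, a * b = a * c → b = c)
    (hr : ∀ a b c : M, b * a = c * a → b = c)
    (S : Set M) (hS : QuasiSpans S)
    (n : ℕ) (hfin : S.Finite) (hcard : S.ncard = n) :
    (∀ x : M, SSimple S x → x ∈ S ^ n * UnitsSet M) ∧
    ∃ F : Finset M, F.card ≤ n ^ n ∧
      ∀ x : M, SSimple S x → ∃ y ∈ F, AssocU y x := by
  classical
  have part1 : ∀ x : M, SSimple S x → x ∈ S ^ n * UnitsSet M := by
    intro x hx
    obtain ⟨m, hm, q, hq, u, hu, hxu⟩ :=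
      recL hl S hS hfin n hcard x hx n 0 1 (by rw [pow_zero]; exact Set.mem_one.mpr rfl)
        ⟨x, (one_mul x).symm⟩ (Nat.zero_le _) (Nat.sub_le _ _)
    obtain ⟨s₀, hs₀S, u₀, hu₀, hsu₀⟩ := Set.mem_mul.mp hS.2.1
    have hu₀s : u₀ * s₀ = 1 := hr u₀ _ _ (by rw [mul_assoc, hsu₀, mul_one, one_mul])
    have hs₀unit : IsUnit s₀ := ⟨⟨s₀, u₀, hsu₀, hu₀s⟩, rfl⟩
    have hpow : IsUnit (s₀ ^ (n - m)) := hs₀unit.pow _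
    obtain ⟨v, hv⟩ := hpow.exists_right_inv
    have hv2 : v * s₀ ^ (n - m) = 1 := hr v _ _ (by rw [mul_assoc, hv, mul_one, one_mul])
    have hvunit : IsUnit v := ⟨⟨v, s₀ ^ (n - m), hv2, hv⟩, rfl⟩
    refine ⟨q * s₀ ^ (n - m), ?_, v * u, hvunit.mul hu, ?_⟩
    · have := Set.mul_mem_mul hq (Set.pow_mem_pow hs₀S (n := n - m))
      rwa [← pow_add, Nat.add_sub_cancel' hm] at this
    · show q * s₀ ^ (n - m) * (v * u) = x
      rw [hxu, mul_assoc, ← mul_assoc (s₀ ^ (n - m)) v u, hv, one_mul]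
  refine ⟨part1, Finset.image (fun f : Fin n → M => (List.ofFn f).prod)
      (Fintype.piFinset fun _ => hfin.toFinset), ?_, ?_⟩
  · calc (Finset.image (fun f : Fin n → M => (List.ofFn f).prod)
        (Fintype.piFinset fun _ => hfin.toFinset)).card
        ≤ (Fintype.piFinset fun _ : Fin n => hfin.toFinset).card := Finset.card_image_le
      _ = ∏ _i : Fin n, hfin.toFinset.card := Fintype.card_piFinset _
      _ = hfin.toFinset.card ^ n := by
          rw [Finset.prod_const, Finset.card_univ, Fintype.card_fin]
      _ = n ^ n := by rw [← Set.ncard_eq_toFinset_card S hfin, hcard]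
  · intro x hx
    obtain ⟨p, hp, u, huU, hxe⟩ := Set.mem_mul.mp (part1 x hx)
    obtain ⟨f, hf⟩ := Set.mem_pow.mp hp
    refine ⟨p, ?_, u, huU, hxe.symm⟩
    exact Finset.mem_image.mpr ⟨fun i => (f i : M),
      Fintype.mem_piFinset.mpr fun i => hfin.mem_toFinset.mpr (f i).2, hf⟩
end

section
/- Assume M is a cancellative monoid and S quasi-spans M. Then for all x, y, z in M: (i) y \triangleright_S z implies xy \triangleright_S z; (ii) the conjunction of x \triangleright_S y and y \triangleright_S z implies x \triangleright_S yz. Consequently, a sequence (x_1, ..., x_n) is S-prenormal if and only if x_i \triangleright_S x_{i+1} holds for each i < n. -/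
/-!
Every element of `S M^*` left-dividing `a * b` left-divides `a * t` for some `t ∈ S` that
left-divides `b`: for `a` in `S M^*` this is the common-multiple axiom of spanning plus left
cancellation, and it propagates along products since `S M^*` generates `M`. Hence if `y` covers
`z`, an `s ∈ S` dividing `x * y * z` divides `x * t` with `t ∈ S` dividing `y * z`, so `t ∣ y`
and `s ∣ x * y`. Part (ii) follows by composing (i) with `x ▷ y`. Prenormality of `x :: l`
amounts to `x ▷ l.prod` plus prenormality of `l`, which by (ii) and induction reduces to
covering between consecutive entries.
-/

open scoped Pointwise

variable {M : Type*} [Monoid M]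

/-- `x` covers `y` with respect to `S`: `Div(xy) ∩ S = Div(x) ∩ S`. -/
def Covers (S : Set M) (x y : M) : Prop :=
  {d : M | LDvd d (x * y)} ∩ S = {d : M | LDvd d x} ∩ S

/-- A sequence is `S`-prenormal: each entry has the same divisors in `S`
as the product of the remaining entries. -/
def Prenormal (S : Set M) (l : List M) : Prop :=
  ∀ i (h : i < l.length),
    {d : M | LDvd d (l.get ⟨i, h⟩)} ∩ S = {d : M | LDvd d ((l.drop i).prod)} ∩ S

section LeftDivisibility

variable {x y z : M}

lemma LDvd.trans (hxy : LDvd x y) (hyz : LDvd y z) : LDvd x z := by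
  obtain ⟨c, rfl⟩ := hxy
  obtain ⟨d, rfl⟩ := hyz
  exact ⟨c * d, mul_assoc x c d⟩

lemma LDvd.mul_right (c : M) (h : LDvd x y) : LDvd x (y * c) :=
  h.trans ⟨c, rfl⟩

lemma LDvd.mul_left (a : M) (h : LDvd x y) : LDvd (a * x) (a * y) := by
  obtain ⟨c, rfl⟩ := h
  exact ⟨c, (mul_assoc a x c).symm⟩

lemma LDvd.of_mul_left (hl : ∀ a b c : M, a * b = a * c → b = c) {a : M}
    (h : LDvd (a * x) (a * y)) : LDvd x y := by
  obtain ⟨c, hc⟩ := h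
  exact ⟨c, hl a _ _ (by rw [hc, mul_assoc])⟩

lemma LDvd.of_mul_unit {u : M} (hu : IsUnit u) (h : LDvd x (y * u)) : LDvd x y := by
  obtain ⟨v, huv, -⟩ := isUnit_iff_exists.mp hu
  simpa [mul_assoc, huv] using h.mul_right v

end LeftDivisibility

lemma Spans.exists_ldvd_of_ldvd_mul (hl : ∀ a b c : M, a * b = a * c → b = c) {T : Set M}
    (hT : Spans T) (a : M) :
    ∀ s ∈ T, ∀ b : M, LDvd s (a * b) → ∃ t ∈ T, LDvd t b ∧ LDvd s (a * t) := by
  obtain ⟨hgen, -, -, hcommon⟩ := hT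
  have ha : a ∈ Submonoid.closure T := hgen ▸ Submonoid.mem_top a
  induction ha using Submonoid.closure_induction with
  | mem a ha =>
    intro s hs b hsab
    obtain ⟨a', -, s', hs', heq, hdvd⟩ := hcommon a ha s hs (a * b) ⟨b, rfl⟩ hsab
    exact ⟨s', hs', hdvd.of_mul_left hl, ⟨a', heq⟩⟩
  | one =>
    intro s hs b hsb
    exact ⟨s, hs, by simpa using hsb, ⟨1, by simp⟩⟩
  | mul a₁ a₂ _ _ ih₁ ih₂ =>
    intro s hs b hsab
    obtain ⟨t₁, ht₁, ht₁b, hst₁⟩ := ih₁ s hs (a₂ * b) (by rwa [← mul_assoc])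
    obtain ⟨t₂, ht₂, ht₂b, ht₁t₂⟩ := ih₂ t₁ ht₁ b ht₁b
    exact ⟨t₂, ht₂, ht₂b, by simpa [mul_assoc] using hst₁.trans (ht₁t₂.mul_left a₁)⟩

lemma QuasiSpans.exists_ldvd_of_ldvd_mul (hl : ∀ a b c : M, a * b = a * c → b = c)
    {S : Set M} (hS : QuasiSpans S) (a : M) {s b : M} (hs : s ∈ S) (hsab : LDvd s (a * b)) :
    ∃ t ∈ S, LDvd t b ∧ LDvd s (a * t) := by
  obtain ⟨t, ⟨t', ht', u, hu, rfl⟩, htb, hst⟩ :=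
    Spans.exists_ldvd_of_ldvd_mul hl hS a s ⟨s, hs, 1, isUnit_one, mul_one s⟩ b hsab
  exact ⟨t', ht', (LDvd.mul_right u ⟨1, (mul_one t').symm⟩).trans htb,
    LDvd.of_mul_unit hu (by rwa [mul_assoc])⟩

section Covering

variable {S : Set M} {x y z : M}

lemma covers_iff : Covers S x y ↔ ∀ s ∈ S, LDvd s (x * y) → LDvd s x := by
  refine ⟨fun h s hs hsxy => (h.subset ⟨hsxy, hs⟩).1, fun h => ?_⟩
  ext s
  exact ⟨fun ⟨hsxy, hs⟩ => ⟨h s hs hsxy, hs⟩, fun ⟨hsx, hs⟩ => ⟨hsx.mul_right y, hs⟩⟩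

lemma covers_one : Covers S x 1 := by
  simp [Covers]

lemma Covers.of_mul_right (h : Covers S x (y * z)) : Covers S x y :=
  covers_iff.2 fun s hs hsxy =>
    covers_iff.1 h s hs (by simpa [mul_assoc] using hsxy.mul_right z)

lemma Covers.mul_left (hl : ∀ a b c : M, a * b = a * c → b = c) (hS : QuasiSpans S)
    (x : M) (h : Covers S y z) : Covers S (x * y) z := by
  refine covers_iff.2 fun s hs hsxyz => ?_
  obtain ⟨t, ht, htyz, hsxt⟩ :=
    hS.exists_ldvd_of_ldvd_mul hl x hs (b := y * z) (by rwa [← mul_assoc])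
  exact hsxt.trans ((covers_iff.1 h t ht htyz).mul_left x)

lemma Covers.mul_right_of_covers (hl : ∀ a b c : M, a * b = a * c → b = c)
    (hS : QuasiSpans S) (hxy : Covers S x y) (hyz : Covers S y z) : Covers S x (y * z) :=
  covers_iff.2 fun s hs hsxyz =>
    covers_iff.1 hxy s hs <| covers_iff.1 (hyz.mul_left hl hS x) s hs (by rwa [mul_assoc])

end Covering

section Prenormal

variable {S : Set M}

lemma prenormal_nil : Prenormal S [] :=
  fun _ h => absurd h (Nat.not_lt_zero _)

lemma prenormal_cons {x : M} {l : List M} :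
    Prenormal S (x :: l) ↔ Covers S x l.prod ∧ Prenormal S l := by
  simp only [Prenormal, List.length_cons, Nat.forall_lt_succ_left', List.get_eq_getElem,
    List.getElem_cons_zero, List.getElem_cons_succ, List.drop_zero, List.drop_succ_cons,
    List.prod_cons, Covers, eq_comm]

lemma prenormal_iff_isChain (hl : ∀ a b c : M, a * b = a * c → b = c) (hS : QuasiSpans S)
    (l : List M) : Prenormal S l ↔ l.IsChain (Covers S) := by
  induction l with
  | nil => simp [prenormal_nil]
  | cons x l ih =>
    rw [prenormal_cons, ih]
    cases l with
    | nil => simp [covers_one]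
    | cons y l =>
      rw [List.isChain_cons_cons, List.prod_cons]
      refine ⟨fun ⟨hx, hchain⟩ => ⟨hx.of_mul_right, hchain⟩, fun ⟨hxy, hchain⟩ => ⟨?_, hchain⟩⟩
      exact hxy.mul_right_of_covers hl hS (prenormal_cons.1 (ih.2 hchain)).1

end Prenormal

theorem stmt18_general
    (hl : ∀ a b c : M, a * b = a * c → b = c)
    (S : Set M) (hS : QuasiSpans S) :
    (∀ x y z : M, Covers S y z → Covers S (x * y) z) ∧
    (∀ x y z : M, Covers S x y → Covers S y z → Covers S x (y * z)) ∧
    (∀ l : List M, Prenormal S l ↔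
      ∀ i (h : i + 1 < l.length),
        Covers S (l.get ⟨i, Nat.lt_of_succ_lt h⟩) (l.get ⟨i + 1, h⟩)) := by
  refine ⟨fun x _ _ => Covers.mul_left hl hS x, fun _ _ _ => Covers.mul_right_of_covers hl hS,
    fun l => ?_⟩
  simpa only [List.get_eq_getElem] using
    (prenormal_iff_isChain hl hS l).trans List.isChain_iff_getElem

theorem stmt18
    (hl : ∀ a b c : M, a * b = a * c → b = c)
    (hr : ∀ a b c : M, b * a = c * a → b = c)
    (S : Set M) (hS : QuasiSpans S) :
    (∀ x y z : M, Covers S y z → Covers S (x * y) z) ∧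
    (∀ x y z : M, Covers S x y → Covers S y z → Covers S x (y * z)) ∧
    (∀ l : List M, Prenormal S l ↔
      ∀ i (h : i + 1 < l.length),
        Covers S (l.get ⟨i, Nat.lt_of_succ_lt h⟩) (l.get ⟨i + 1, h⟩)) :=
  stmt18_general hl S hS
end

section
/- Assume M is a thin cancellative monoid and \Delta is a Garside element in M. Then: for each x in Div(\Delta) there is a unique x^* in Div(\Delta) with x x^* = \Delta; the map x \mapsto x^{**} extends to an automorphism \phi_\Delta of M satisfying x\Delta = \Delta\phi_\Delta(x) for every x in M; \phi_\Delta has finite order e; and \Delta^e lies in the center of M. -/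
open scoped Pointwise

variable {M : Type*} [Monoid M]

theorem stmt19
    (hl : ∀ a b c : M, a * b = a * c → b = c)
    (hr : ∀ a b c : M, b * a = c * a → b = c)
    (hthin : ∃ T : Set M, T.Finite ∧ Spans T)
    (Δ : M) (hfin : {d : M | LDvd d Δ}.Finite)
    (hspan : Spans {d : M | LDvd d Δ}) :
    (∀ x : M, LDvd x Δ → ∃! x' : M, LDvd x' Δ ∧ x * x' = Δ) ∧
    (∀ x' : M, LDvd x' Δ → ∃ x : M, LDvd x Δ ∧ x * x' = Δ) ∧
    ∃ (φ : M ≃* M) (e : ℕ), 0 < e ∧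
      (∀ x x' x'' : M, LDvd x Δ → x * x' = Δ → x' * x'' = Δ → φ x = x'') ∧
      (∀ x : M, x * Δ = Δ * φ x) ∧
      (⇑φ)^[e] = id ∧
      (∀ y : M, Δ ^ e * y = y * Δ ^ e) := by
  classical
  obtain ⟨hcl, hone, hunit, hcond⟩ := hspan
  set S : Set M := {d : M | LDvd d Δ} with hSdef
  -- right complements exist inside S
  have lemA : ∀ x, LDvd x Δ → ∃ c, LDvd c Δ ∧ x * c = Δ := by
    intro x hx
    have hΔS : LDvd Δ Δ := ⟨1, (mul_one Δ).symm⟩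
    obtain ⟨x', hx'S, y', hy'S, heq, hdvd⟩ := hcond x hx Δ hΔS Δ hx hΔS
    obtain ⟨t, ht⟩ := hdvd
    have h1 : Δ * 1 = Δ * (x' * t) := by
      calc Δ * 1 = Δ := mul_one Δ
        _ = x * y' * t := ht
        _ = Δ * x' * t := by rw [heq]
        _ = Δ * (x' * t) := mul_assoc _ _ _
    have hxt : x' * t = 1 := (hl _ _ _ h1).symm
    have htx : t * x' = 1 := by
      have h2 : (t * x') * t = 1 * t := by
        rw [one_mul, mul_assoc, hxt, mul_one]
      exact hr _ _ _ h2
    have hut : IsUnit t := ⟨⟨t, x', htx, hxt⟩, rfl⟩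
    refine ⟨y' * t, hunit y' hy'S t hut, ?_⟩
    rw [← mul_assoc]
    exact ht.symm
  -- the complement map
  let f : M → M := fun x => if h : LDvd x Δ then (lemA x h).choose else 1
  have hf : ∀ x, LDvd x Δ → LDvd (f x) Δ ∧ x * f x = Δ := by
    intro x h
    simp only [f, dif_pos h]
    exact (lemA x h).choose_spec
  have hmapsTo : Set.MapsTo f S S := fun x hx => (hf x hx).1
  have hinjOn : Set.InjOn f S := by
    intro a ha b hb hab
    exact hr (f a) a b (by rw [(hf a ha).2, hab, (hf b hb).2])
  have hbij : Set.BijOn f S S :=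
    (hfin.injOn_iff_bijOn_of_mapsTo hmapsTo).mp hinjOn
  -- left complements
  have lemB : ∀ x', LDvd x' Δ → ∃ x, LDvd x Δ ∧ x * x' = Δ := by
    intro x' hx'
    obtain ⟨x, hxS, hfx⟩ := hbij.surjOn hx'
    exact ⟨x, hxS, by rw [← hfx]; exact (hf x hxS).2⟩
  -- conjugation exists on all of M
  have h1 : ∀ m : M, ∃ y, m * Δ = Δ * y := by
    intro m
    have hm : m ∈ Submonoid.closure S := by rw [hcl]; trivial
    induction hm using Submonoid.closure_induction with
    | mem x hx =>
        obtain ⟨c, hc, hxc⟩ := lemA x hx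
        obtain ⟨d, hd, hcd⟩ := lemA c hc
        refine ⟨d, ?_⟩
        calc x * Δ = x * (c * d) := by rw [hcd]
          _ = Δ * d := by rw [← mul_assoc, hxc]
    | one => exact ⟨1, by rw [one_mul, mul_one]⟩
    | mul a b _ _ iha ihb =>
        obtain ⟨ya, hya⟩ := iha
        obtain ⟨yb, hyb⟩ := ihb
        exact ⟨ya * yb, by rw [mul_assoc, hyb, ← mul_assoc, hya, mul_assoc]⟩
  have h2 : ∀ m : M, ∃ x, Δ * m = x * Δ := by
    intro m
    have hm : m ∈ Submonoid.closure S := by rw [hcl]; trivial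
    induction hm using Submonoid.closure_induction with
    | mem y hy =>
        obtain ⟨w, hw, hwy⟩ := lemB y hy
        obtain ⟨u, hu, huw⟩ := lemB w hw
        refine ⟨u, ?_⟩
        calc Δ * y = u * w * y := by rw [huw]
          _ = u * Δ := by rw [mul_assoc, hwy]
    | one => exact ⟨1, by rw [mul_one, one_mul]⟩
    | mul a b _ _ iha ihb =>
        obtain ⟨xa, hxa⟩ := iha
        obtain ⟨xb, hxb⟩ := ihb
        exact ⟨xa * xb, by rw [← mul_assoc, hxa, mul_assoc, hxb, ← mul_assoc]⟩
  choose φf hφf using h1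
  choose ψf hψf using h2
  have hlinv : ∀ m, ψf (φf m) = m := fun m =>
    hr Δ _ _ ((hψf (φf m)).symm.trans (hφf m).symm)
  have hrinv : ∀ m, φf (ψf m) = m := fun m =>
    hl Δ _ _ ((hφf (ψf m)).symm.trans (hψf m).symm)
  have hmul : ∀ a b : M, φf (a * b) = φf a * φf b := by
    intro a b
    apply hl Δ
    rw [← hφf (a * b), mul_assoc, hφf b, ← mul_assoc, hφf a, mul_assoc]
  have hinj : Function.Injective φf := Function.LeftInverse.injective hlinv
  -- φ maps S into S
  have hφS : ∀ x ∈ S, φf x ∈ S := by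
    intro x hx
    obtain ⟨c, hc, hxc⟩ := lemA x hx
    obtain ⟨d, hd, hcd⟩ := lemA c hc
    have : Δ * φf x = Δ * d := by
      calc Δ * φf x = x * Δ := (hφf x).symm
        _ = x * (c * d) := by rw [hcd]
        _ = Δ * d := by rw [← mul_assoc, hxc]
    rw [hl _ _ _ this]
    exact hd
  have hitS : ∀ n, ∀ x ∈ S, φf^[n] x ∈ S := by
    intro n
    induction n with
    | zero => intro x hx; simpa using hx
    | succ n ih =>
        intro x hx
        rw [Function.iterate_succ_apply']
        exact hφS _ (ih x hx)
  -- find the order e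
  have : Finite ↥S := hfin.to_subtype
  have hF := Finite.exists_ne_map_eq_of_infinite
    (fun n : ℕ => (fun x : ↥S => (⟨φf^[n] x, hitS n x x.2⟩ : ↥S)))
  obtain ⟨i, j, hne, hFij⟩ := hF
  have key : ∀ i j : ℕ, i < j →
      (fun x : ↥S => (⟨φf^[i] x, hitS i x x.2⟩ : ↥S)) =
      (fun x : ↥S => (⟨φf^[j] x, hitS j x x.2⟩ : ↥S)) →
      ∀ x ∈ S, φf^[j - i] x = x := by
    intro i j hij hFeq x hx
    have hij' : φf^[i] x = φf^[j] x :=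
      congrArg Subtype.val (congrFun hFeq ⟨x, hx⟩)
    have h3 : φf^[i] (φf^[j - i] x) = φf^[i] x := by
      rw [← Function.iterate_add_apply]
      have : i + (j - i) = j := by omega
      rw [this, ← hij']
    exact (hinj.iterate i) h3
  obtain ⟨e, he, heS⟩ : ∃ e : ℕ, 0 < e ∧ ∀ x ∈ S, φf^[e] x = x := by
    rcases hne.lt_or_gt with h | h
    · exact ⟨j - i, by omega, key i j h hFij⟩
    · exact ⟨i - j, by omega, key j i h hFij.symm⟩
  have hit_one : ∀ n, φf^[n] (1 : M) = 1 := by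
    intro n
    induction n with
    | zero => rfl
    | succ n ih =>
        rw [Function.iterate_succ_apply', ih]
        apply hl Δ
        rw [← hφf 1, one_mul, mul_one]
  have hit_mul : ∀ n (a b : M), φf^[n] (a * b) = φf^[n] a * φf^[n] b := by
    intro n
    induction n with
    | zero => intro a b; rfl
    | succ n ih =>
        intro a b
        rw [Function.iterate_succ_apply', Function.iterate_succ_apply',
          Function.iterate_succ_apply', ih, hmul]
  have hiter_id : ∀ m : M, φf^[e] m = m := by
    intro m
    have hm : m ∈ Submonoid.closure S := by rw [hcl]; trivial
    induction hm using Submonoid.closure_induction with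
    | mem x hx => exact heS x hx
    | one => exact hit_one e
    | mul a b _ _ iha ihb => rw [hit_mul, iha, ihb]
  have hpow : ∀ n (y : M), y * Δ ^ n = Δ ^ n * φf^[n] y := by
    intro n
    induction n with
    | zero => intro y; simp
    | succ n ih =>
        intro y
        rw [pow_succ, ← mul_assoc, ih, mul_assoc, hφf, Function.iterate_succ_apply',
          ← mul_assoc]
  let φ : M ≃* M :=
    { toFun := φf, invFun := ψf, left_inv := hlinv, right_inv := hrinv,
      map_mul' := hmul }
  have hcoe : ⇑φ = φf := rfl
  refine ⟨?_, lemB, φ, e, he, ?_, ?_, ?_, ?_⟩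
  · intro x hx
    obtain ⟨c, hc, hxc⟩ := lemA x hx
    exact ⟨c, ⟨hc, hxc⟩, fun y hy => hl x y c (hy.2.trans hxc.symm)⟩
  · intro x x' x'' _ hxx' hx'x''
    apply hl Δ
    rw [hcoe]
    calc Δ * φf x = x * Δ := (hφf x).symm
      _ = x * (x' * x'') := by rw [hx'x'']
      _ = Δ * x'' := by rw [← mul_assoc, hxx']
  · intro x; rw [hcoe, hφf]
  · funext m; rw [hcoe, hiter_id]; rfl
  · intro y
    rw [hpow e y, hiter_id]
end
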